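/- arXiv:2109.01160 — 13 statements merged into one kernel-verified Lean document; each statement's English description precedes it below -/
import Mathlib

section
/- Let M = (M_x)_{x∈X} be a POVM on ℂ^d and suppose there exist unit vectors φ, φ⊥ ∈ ℂ^d with ⟨φ, φ⊥⟩ = 0 such that for every x ∈ X either M_x φ = 0 or M_x φ⊥ = 0 (perfect distinguishability). Then, setting ζ := (φ + φ⊥)/√2 and ζ⊥ := (φ − φ⊥)/√2 (a pair of orthogonal unit vectors), one has Γ_M(ζ, ζ⊥) = 1. -/
open Matrix
open scoped Classical ComplexOrder

/-- Re⟨u, M_x v⟩, the real part of the sesquilinear form of a POVM element. -/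
noncomputable def qre {ι X : Type*} [Fintype ι] [Fintype X]
    (M : X → Matrix ι ι ℂ) (u v : ι → ℂ) (x : X) : ℝ :=
  (star u ⬝ᵥ ((M x) *ᵥ v)).re

/-- The distinguishability functional Γ_M(ξ, ξ⊥). -/
noncomputable def Gamma {ι X : Type*} [Fintype ι] [Fintype X]
    (M : X → Matrix ι ι ℂ) (ξ ξperp : ι → ℂ) : ℝ :=
  ∑ x ∈ Finset.univ.filter (fun x => 0 < qre M ξ ξ x),
    (qre M ξperp ξ x) ^ 2 / qre M ξ ξ x

/-- If a POVM perfectly distinguishes a pair of orthogonal unit vectors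
φ, φ⊥ (each element annihilates one of them), then for the rotated pair
ζ = (φ + φ⊥)/√2, ζ⊥ = (φ − φ⊥)/√2 one has Γ_M(ζ, ζ⊥) = 1. -/
theorem gamma_eq_one_of_perfect_distinguishability
    {d : ℕ} (hd : 1 ≤ d) {X : Type*} [Fintype X] [Nonempty X]
    (M : X → Matrix (Fin d) (Fin d) ℂ)
    (hpsd : ∀ x, (M x).PosSemidef) (hsum : ∑ x, M x = 1)
    (φ φperp : Fin d → ℂ)
    (hφ : star φ ⬝ᵥ φ = 1) (hφperp : star φperp ⬝ᵥ φperp = 1)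
    (horth : star φ ⬝ᵥ φperp = 0)
    (hperfect : ∀ x, (M x) *ᵥ φ = 0 ∨ (M x) *ᵥ φperp = 0)
    (ζ ζperp : Fin d → ℂ)
    (hζ : ζ = fun i => (φ i + φperp i) / (Real.sqrt 2 : ℂ))
    (hζperp : ζperp = fun i => (φ i - φperp i) / (Real.sqrt 2 : ℂ)) :
    Gamma M ζ ζperp = 1 := by
  set s : ℂ := ((Real.sqrt 2 : ℝ) : ℂ) with hsdef
  have hs2 : s * s = 2 := by
    rw [hsdef, ← Complex.ofReal_mul, Real.mul_self_sqrt (by norm_num : (0:ℝ) ≤ 2)]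
    norm_num
  have hsstar : star s = s := by rw [hsdef]; exact Complex.conj_ofReal _
  have hζ1 : ζ = s⁻¹ • (φ + φperp) := by
    rw [hζ]; funext i
    simp [Pi.smul_apply, smul_eq_mul, div_eq_inv_mul]
  have hζp1 : ζperp = s⁻¹ • (φ - φperp) := by
    rw [hζperp]; funext i
    simp [Pi.smul_apply, smul_eq_mul, div_eq_inv_mul]
  have hstarsmul : ∀ (v : Fin d → ℂ), star (s⁻¹ • v) = s⁻¹ • star v := by
    intro v
    rw [star_smul, star_inv₀, hsstar]
  -- expansion lemma for dot products of scaled vectors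
  have expand : ∀ (u v : Fin d → ℂ),
      star (s⁻¹ • u) ⬝ᵥ (s⁻¹ • v) = 2⁻¹ * (star u ⬝ᵥ v) := by
    intro u v
    rw [hstarsmul, smul_dotProduct, dotProduct_smul, smul_eq_mul, smul_eq_mul,
      ← mul_assoc, ← mul_inv, hs2]
  have horth' : star φperp ⬝ᵥ φ = 0 := by
    rw [star_dotProduct, horth, star_zero]
  -- norm of ζ
  have hζnorm : star ζ ⬝ᵥ ζ = 1 := by
    rw [hζ1, expand, star_add, add_dotProduct, dotProduct_add, dotProduct_add,
      hφ, hφperp, horth, horth']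
    norm_num
  have hM : ∀ x, (M x).IsHermitian := fun x => (hpsd x).1
  -- hermitian transfer lemmas
  have herm : ∀ x (u v : Fin d → ℂ), M x *ᵥ u = 0 → star u ⬝ᵥ (M x *ᵥ v) = 0 := by
    intro x u v h
    rw [dotProduct_mulVec, ← (hM x).eq, ← star_mulVec, h, star_zero, zero_dotProduct]
  have keyB : ∀ x, star ζperp ⬝ᵥ (M x *ᵥ ζ) = star ζ ⬝ᵥ (M x *ᵥ ζ) ∨
      star ζperp ⬝ᵥ (M x *ᵥ ζ) = -(star ζ ⬝ᵥ (M x *ᵥ ζ)) := by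
    intro x
    have hms : M x *ᵥ (s⁻¹ • (φ + φperp)) = s⁻¹ • (M x *ᵥ φ + M x *ᵥ φperp) := by
      rw [mulVec_smul, mulVec_add]
    rcases hperfect x with h | h
    · right
      rw [hζ1, hζp1, hms, h, zero_add, expand, expand, star_add, star_sub,
        add_dotProduct, sub_dotProduct, herm x φ φperp h]
      ring
    · left
      rw [hζ1, hζp1, hms, h, add_zero, expand, expand, star_add, star_sub,
        add_dotProduct, sub_dotProduct, herm x φperp φ h]
      ring
  have key2 : ∀ x, (qre M ζperp ζ x) ^ 2 = (qre M ζ ζ x) ^ 2 := by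
    intro x
    unfold qre
    rcases keyB x with h | h
    · rw [h]
    · rw [h, Complex.neg_re, neg_sq]
  -- nonnegativity of qre M ζ ζ
  have hnn : ∀ x, 0 ≤ qre M ζ ζ x := by
    intro x
    have := (hpsd x).dotProduct_mulVec_nonneg ζ
    exact (Complex.le_def.mp this).1
  -- Gamma equals the full sum of qre
  have step1 : Gamma M ζ ζperp = ∑ x ∈ Finset.univ.filter (fun x => 0 < qre M ζ ζ x),
      qre M ζ ζ x := by
    unfold Gamma
    refine Finset.sum_congr rfl ?_
    intro x hx
    have hx' : 0 < qre M ζ ζ x := (Finset.mem_filter.mp hx).2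
    rw [key2 x, sq, mul_div_assoc, div_self hx'.ne', mul_one]
  have step2 : ∑ x ∈ Finset.univ.filter (fun x => 0 < qre M ζ ζ x), qre M ζ ζ x
      = ∑ x, qre M ζ ζ x := by
    refine Finset.sum_subset (Finset.filter_subset _ _) ?_
    intro x _ hx
    have : ¬ (0 < qre M ζ ζ x) := by
      intro h; exact hx (Finset.mem_filter.mpr ⟨Finset.mem_univ x, h⟩)
    linarith [hnn x]
  have step3 : ∑ x, qre M ζ ζ x = 1 := by
    unfold qre
    rw [← Complex.re_sum]
    have : ∑ x, star ζ ⬝ᵥ (M x *ᵥ ζ) = star ζ ⬝ᵥ ((∑ x, M x) *ᵥ ζ) := by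
      have h1 : ((∑ x, M x) *ᵥ ζ) = ∑ x, (M x *ᵥ ζ) := by
        ext i
        simp [mulVec, dotProduct, Matrix.sum_apply, Finset.sum_mul]
        rw [Finset.sum_comm]
      rw [h1]
      simp [dotProduct, Finset.mul_sum, Finset.sum_apply]
      rw [Finset.sum_comm]
    rw [this, hsum, one_mulVec, hζnorm, Complex.one_re]
  rw [step1, step2, step3]
end

section
/- Data-processing inequality for composed detection channels: let I, K, X be nonempty finite sets, let p₁ : K × I → ℝ satisfy p₁(k|j) ≥ 0 and Σ_{k∈K} p₁(k|j) = 1 for every j ∈ I, and let p₂ : X × K → ℝ satisfy p₂(x|k) ≥ 0 and Σ_{x∈X} p₂(x|k) = 1 for every k ∈ K. Let a, b : I → ℝ with a_j ≠ 0 for all j. Writing P(x|j) := Σ_{k∈K} p₂(x|k) p₁(k|j), D(x) := Σ_{j∈I} P(x|j) a_j², and D'(k) := Σ_{j∈I} p₁(k|j) a_j², one has Σ over x ∈ X with D(x) > 0 of (Σ_{j∈I} P(x|j) a_j b_j)² / D(x) ≤ Σ over k ∈ K with D'(k) > 0 of (Σ_{j∈I} p₁(k|j) a_j b_j)² / D'(k).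 -/
open scoped Classical

/-- Data-processing inequality for composed detection channels:
the Fisher-information-type functional of the composed kernel P = p₂ ∘ p₁ is
bounded by that of the first kernel p₁ alone. -/
theorem dpi_composed_channels
    {I K X : Type*} [Fintype I] [Fintype K] [Fintype X]
    [Nonempty I] [Nonempty K] [Nonempty X]
    (p₁ : K → I → ℝ) (p₂ : X → K → ℝ)
    (h1nn : ∀ k j, 0 ≤ p₁ k j) (h1s : ∀ j, ∑ k, p₁ k j = 1)
    (h2nn : ∀ x k, 0 ≤ p₂ x k) (h2s : ∀ k, ∑ x, p₂ x k = 1)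
    (a b : I → ℝ) (ha : ∀ j, a j ≠ 0) :
    (∑ x ∈ Finset.univ.filter
        (fun x => 0 < ∑ j, (∑ k, p₂ x k * p₁ k j) * (a j) ^ 2),
      (∑ j, (∑ k, p₂ x k * p₁ k j) * a j * b j) ^ 2
        / ∑ j, (∑ k, p₂ x k * p₁ k j) * (a j) ^ 2)
    ≤ ∑ k ∈ Finset.univ.filter (fun k => 0 < ∑ j, p₁ k j * (a j) ^ 2),
        (∑ j, p₁ k j * a j * b j) ^ 2 / ∑ j, p₁ k j * (a j) ^ 2 := by
  set N' : K → ℝ := fun k => ∑ j, p₁ k j * a j * b j with hN'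
  set D' : K → ℝ := fun k => ∑ j, p₁ k j * (a j) ^ 2 with hD'
  have hD'nn : ∀ k, 0 ≤ D' k := fun k =>
    Finset.sum_nonneg fun j _ => mul_nonneg (h1nn k j) (sq_nonneg _)
  -- if D' k = 0 then p₁ k j = 0 for all j, hence N' k = 0
  have hker : ∀ k, ¬ 0 < D' k → ∀ j, p₁ k j = 0 := by
    intro k hk j
    have h0 : D' k = 0 := le_antisymm (not_lt.mp hk) (hD'nn k)
    have := (Finset.sum_eq_zero_iff_of_nonneg
      (fun j _ => mul_nonneg (h1nn k j) (sq_nonneg (a j)))).mp h0 j (Finset.mem_univ j)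
    have ha2 : (a j) ^ 2 ≠ 0 := pow_ne_zero _ (ha j)
    exact (mul_eq_zero.mp this).resolve_right ha2
  have hN'0 : ∀ k, ¬ 0 < D' k → N' k = 0 := fun k hk =>
    Finset.sum_eq_zero fun j _ => by rw [hker k hk j]; ring
  set Kpos := Finset.univ.filter (fun k => 0 < D' k) with hKpos
  -- per-x bound
  have key : ∀ x : X,
      (∑ j, (∑ k, p₂ x k * p₁ k j) * a j * b j) ^ 2
        / (∑ j, (∑ k, p₂ x k * p₁ k j) * (a j) ^ 2)
      ≤ ∑ k ∈ Kpos, p₂ x k * (N' k ^ 2 / D' k) := by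
    intro x
    set s := Finset.univ.filter (fun k => 0 < p₂ x k * D' k) with hs
    have hsub : s ⊆ Kpos := by
      intro k hk
      simp only [hs, hKpos, Finset.mem_filter, Finset.mem_univ, true_and] at hk ⊢
      nlinarith [hk, h2nn x k, hD'nn k]
    have hgpos : ∀ k ∈ s, 0 < p₂ x k * D' k := by
      intro k hk
      simpa [hs] using hk
    have hNx : (∑ j, (∑ k, p₂ x k * p₁ k j) * a j * b j)
        = ∑ k ∈ s, p₂ x k * N' k := by
      have : (∑ j, (∑ k, p₂ x k * p₁ k j) * a j * b j)
          = ∑ k, p₂ x k * N' k := by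
        have e1 : ∀ j : I, (∑ k, p₂ x k * p₁ k j) * a j * b j
            = ∑ k, p₂ x k * (p₁ k j * a j * b j) := by
          intro j
          rw [Finset.sum_mul, Finset.sum_mul]
          exact Finset.sum_congr rfl fun k _ => by ring
        simp only [e1]
        rw [Finset.sum_comm]
        simp [hN', Finset.mul_sum]
      rw [this]
      symm
      apply Finset.sum_subset (Finset.filter_subset _ _)
      intro k _ hk
      simp only [hs, Finset.mem_filter, Finset.mem_univ, true_and, not_lt] at hk
      have h0 : p₂ x k * D' k = 0 :=
        le_antisymm hk (mul_nonneg (h2nn x k) (hD'nn k))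
      rcases mul_eq_zero.mp h0 with h | h
      · rw [h]; ring
      · rw [hN'0 k (by rw [h]; exact lt_irrefl 0)]; ring
    have hDx : (∑ j, (∑ k, p₂ x k * p₁ k j) * (a j) ^ 2)
        = ∑ k ∈ s, p₂ x k * D' k := by
      have : (∑ j, (∑ k, p₂ x k * p₁ k j) * (a j) ^ 2)
          = ∑ k, p₂ x k * D' k := by
        have e1 : ∀ j : I, (∑ k, p₂ x k * p₁ k j) * (a j) ^ 2
            = ∑ k, p₂ x k * (p₁ k j * (a j) ^ 2) := by
          intro j
          rw [Finset.sum_mul]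
          exact Finset.sum_congr rfl fun k _ => by ring
        simp only [e1]
        rw [Finset.sum_comm]
        simp [hD', Finset.mul_sum]
      rw [this]
      symm
      apply Finset.sum_subset (Finset.filter_subset _ _)
      intro k _ hk
      simp only [hs, Finset.mem_filter, Finset.mem_univ, true_and, not_lt] at hk
      exact le_antisymm hk (mul_nonneg (h2nn x k) (hD'nn k))
    rw [hNx, hDx]
    calc (∑ k ∈ s, p₂ x k * N' k) ^ 2 / ∑ k ∈ s, p₂ x k * D' k
        ≤ ∑ k ∈ s, (p₂ x k * N' k) ^ 2 / (p₂ x k * D' k) :=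
          Finset.sq_sum_div_le_sum_sq_div s _ hgpos
      _ = ∑ k ∈ s, p₂ x k * (N' k ^ 2 / D' k) := by
          apply Finset.sum_congr rfl
          intro k hk
          have h := hgpos k hk
          have hp : p₂ x k ≠ 0 := by
            intro h0; rw [h0, zero_mul] at h; exact lt_irrefl 0 h
          have hd : D' k ≠ 0 := by
            intro h0; rw [h0, mul_zero] at h; exact lt_irrefl 0 h
          field_simp
      _ ≤ ∑ k ∈ Kpos, p₂ x k * (N' k ^ 2 / D' k) := by
          apply Finset.sum_le_sum_of_subset_of_nonneg hsub
          intro k hk _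
          exact mul_nonneg (h2nn x k)
            (div_nonneg (sq_nonneg _) (hD'nn k))
  calc (∑ x ∈ Finset.univ.filter
        (fun x => 0 < ∑ j, (∑ k, p₂ x k * p₁ k j) * (a j) ^ 2),
      (∑ j, (∑ k, p₂ x k * p₁ k j) * a j * b j) ^ 2
        / ∑ j, (∑ k, p₂ x k * p₁ k j) * (a j) ^ 2)
      ≤ ∑ x ∈ Finset.univ.filter
        (fun x => 0 < ∑ j, (∑ k, p₂ x k * p₁ k j) * (a j) ^ 2),
          ∑ k ∈ Kpos, p₂ x k * (N' k ^ 2 / D' k) :=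
        Finset.sum_le_sum fun x _ => key x
    _ ≤ ∑ x, ∑ k ∈ Kpos, p₂ x k * (N' k ^ 2 / D' k) := by
        apply Finset.sum_le_sum_of_subset_of_nonneg (Finset.filter_subset _ _)
        intro x _ _
        exact Finset.sum_nonneg fun k _ => mul_nonneg (h2nn x k)
          (div_nonneg (sq_nonneg _) (hD'nn k))
    _ = ∑ k ∈ Kpos, N' k ^ 2 / D' k := by
        rw [Finset.sum_comm]
        apply Finset.sum_congr rfl
        intro k _
        rw [← Finset.sum_mul, h2s k, one_mul]
end

section
/- Let M = (M_j)_{j∈X} be a POVM on ℂ^d. Consider the two POVMs on ℂ^{d·d} (matrices indexed by Fin d × Fin d) given by the Kronecker products (M_j ⊗ I)_{j∈X} and (M_j ⊗ M_k)_{(j,k)∈X×X}. Then for every pair of unit vectors Ξ, Ξ⊥ ∈ ℂ^{d·d} with ⟨Ξ, Ξ⊥⟩ = 0 one has Γ_{(M_j⊗I)_j}(Ξ, Ξ⊥) ≤ Γ_{(M_j⊗M_k)_{j,k}}(Ξ, Ξ⊥). -/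
open Matrix
open scoped Classical ComplexOrder

open Kronecker

lemma conjTranspose_kron {m n : Type*} (A : Matrix m m ℂ) (B : Matrix n n ℂ) :
    (A ⊗ₖ B)ᴴ = Aᴴ ⊗ₖ Bᴴ := by
  ext ⟨i, j⟩ ⟨k, l⟩
  simp [conjTranspose_apply, kroneckerMap_apply, mul_comm]

lemma kron_posSemidef {m n : Type*} [Fintype m] [Fintype n] [DecidableEq m] [DecidableEq n]
    {A : Matrix m m ℂ} {B : Matrix n n ℂ}
    (hA : A.PosSemidef) (hB : B.PosSemidef) : (A ⊗ₖ B).PosSemidef := by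
  exact hA.kronecker hB

/-- Adding a second measured system can only increase the
distinguishability functional: Γ_{(M_j ⊗ I)} ≤ Γ_{(M_j ⊗ M_k)} for any pair of
orthogonal unit vectors on the doubled space. -/
theorem gamma_kron_id_le_gamma_kron_kron
    {d : ℕ} (hd : 1 ≤ d) {X : Type*} [Fintype X] [Nonempty X]
    (M : X → Matrix (Fin d) (Fin d) ℂ)
    (hpsd : ∀ x, (M x).PosSemidef) (hsum : ∑ x, M x = 1)
    (Ξ Ξperp : Fin d × Fin d → ℂ)
    (hΞ : star Ξ ⬝ᵥ Ξ = 1) (hΞperp : star Ξperp ⬝ᵥ Ξperp = 1)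
    (horth : star Ξ ⬝ᵥ Ξperp = 0) :
    Gamma (fun j : X => M j ⊗ₖ (1 : Matrix (Fin d) (Fin d) ℂ)) Ξ Ξperp
      ≤ Gamma (fun jk : X × X => M jk.1 ⊗ₖ M jk.2) Ξ Ξperp := by
  -- abbreviations
  set N : X → X → Matrix (Fin d × Fin d) (Fin d × Fin d) ℂ := fun j k => M j ⊗ₖ M k with hN
  have hNpsd : ∀ j k, (N j k).PosSemidef := fun j k => kron_posSemidef (hpsd j) (hpsd k)
  set a : X → X → ℝ := fun j k => qre (fun jk : X × X => M jk.1 ⊗ₖ M jk.2) Ξperp Ξ (j, k) with ha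
  set b : X → X → ℝ := fun j k => qre (fun jk : X × X => M jk.1 ⊗ₖ M jk.2) Ξ Ξ (j, k) with hb
  -- the left POVM element is the sum of the right ones over k
  have hsplit : ∀ j : X, M j ⊗ₖ (1 : Matrix (Fin d) (Fin d) ℂ) = ∑ k, N j k := by
    intro j
    conv_lhs => rw [show (1 : Matrix (Fin d) (Fin d) ℂ) = ∑ k, M k from hsum.symm]
    ext ⟨i₁, i₂⟩ ⟨l₁, l₂⟩
    simp [hN, Matrix.sum_apply, kroneckerMap_apply, Finset.mul_sum]
  have hqre : ∀ (u v : Fin d × Fin d → ℂ) (j : X),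
      qre (fun j : X => M j ⊗ₖ (1 : Matrix (Fin d) (Fin d) ℂ)) u v j
        = ∑ k, qre (fun jk : X × X => M jk.1 ⊗ₖ M jk.2) u v (j, k) := by
    intro u v j
    simp only [qre, hsplit j]
    have hmv : (∑ k, N j k) *ᵥ v = ∑ k, (N j k) *ᵥ v :=
      map_sum (AddMonoidHom.mk' (fun A : Matrix (Fin d × Fin d) (Fin d × Fin d) ℂ => A *ᵥ v)
        fun A B => Matrix.add_mulVec A B v) _ _
    rw [hmv,
      show star u ⬝ᵥ (∑ k, N j k *ᵥ v) = ∑ k, star u ⬝ᵥ (N j k *ᵥ v) from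
        map_sum (AddMonoidHom.mk' (fun w : Fin d × Fin d → ℂ => star u ⬝ᵥ w)
          fun w₁ w₂ => dotProduct_add _ _ _) _ _,
      Complex.re_sum]
  -- positivity facts
  have hbnn : ∀ j k, (0 : ℝ) ≤ b j k := by
    intro j k
    have := (hNpsd j k).dotProduct_mulVec_nonneg Ξ
    exact (Complex.le_def.mp this).1
  have hb_eq : ∀ j k, b j k = 0 → a j k = 0 := by
    intro j k h0
    have hle := (hNpsd j k).dotProduct_mulVec_nonneg Ξ
    have hz : star Ξ ⬝ᵥ (N j k) *ᵥ Ξ = 0 := by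
      apply Complex.ext
      · simpa [hb, qre, hN] using h0
      · simpa using ((Complex.le_def.mp hle).2).symm
    have hv : (N j k) *ᵥ Ξ = 0 := ((hNpsd j k).dotProduct_mulVec_zero_iff Ξ).mp hz
    simp only [hN] at hv
    simp [ha, qre, hv]
  -- per-j inequality
  have key : ∀ j : X,
      (∑ k, a j k) ^ 2 / (∑ k, b j k)
        ≤ ∑ k, if 0 < b j k then (a j k) ^ 2 / b j k else 0 := by
    intro j
    set s : Finset X := Finset.univ.filter (fun k => 0 < b j k) with hs
    have hga : ∑ k, a j k = ∑ k ∈ s, a j k := by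
      refine (Finset.sum_subset (Finset.subset_univ s) ?_).symm
      intro k _ hk
      have : ¬ 0 < b j k := by simpa [hs] using hk
      exact hb_eq j k (le_antisymm (not_lt.mp this) (hbnn j k))
    have hgb : ∑ k, b j k = ∑ k ∈ s, b j k := by
      refine (Finset.sum_subset (Finset.subset_univ s) ?_).symm
      intro k _ hk
      have : ¬ 0 < b j k := by simpa [hs] using hk
      exact le_antisymm (not_lt.mp this) (hbnn j k)
    have hrhs : (∑ k, if 0 < b j k then (a j k) ^ 2 / b j k else 0)
        = ∑ k ∈ s, (a j k) ^ 2 / b j k := by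
      rw [hs, Finset.sum_filter]
    rw [hga, hgb, hrhs]
    exact Finset.sq_sum_div_le_sum_sq_div s (a j) (fun k hk => (Finset.mem_filter.mp hk).2)
  -- assemble
  have hRHS : Gamma (fun jk : X × X => M jk.1 ⊗ₖ M jk.2) Ξ Ξperp
      = ∑ j, ∑ k, if 0 < b j k then (a j k) ^ 2 / b j k else 0 := by
    rw [Gamma, Finset.sum_filter, ← Finset.sum_product']
    rw [show (Finset.univ ×ˢ Finset.univ : Finset (X × X)) = Finset.univ from by
      simp [Finset.univ_product_univ]]
  rw [hRHS, Gamma]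
  calc ∑ j ∈ Finset.univ.filter
        (fun j => 0 < qre (fun j : X => M j ⊗ₖ (1 : Matrix (Fin d) (Fin d) ℂ)) Ξ Ξ j),
        (qre (fun j : X => M j ⊗ₖ (1 : Matrix (Fin d) (Fin d) ℂ)) Ξperp Ξ j) ^ 2
          / qre (fun j : X => M j ⊗ₖ (1 : Matrix (Fin d) (Fin d) ℂ)) Ξ Ξ j
      ≤ ∑ j ∈ Finset.univ.filter
        (fun j => 0 < qre (fun j : X => M j ⊗ₖ (1 : Matrix (Fin d) (Fin d) ℂ)) Ξ Ξ j),
        ∑ k, if 0 < b j k then (a j k) ^ 2 / b j k else 0 := by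
        refine Finset.sum_le_sum fun j _ => ?_
        rw [hqre Ξperp Ξ j, hqre Ξ Ξ j]
        exact key j
    _ ≤ ∑ j, ∑ k, if 0 < b j k then (a j k) ^ 2 / b j k else 0 := by
        refine Finset.sum_le_sum_of_subset_of_nonneg (Finset.filter_subset _ _) ?_
        intro j _ _
        refine Finset.sum_nonneg fun k _ => ?_
        split
        · exact div_nonneg (sq_nonneg _) (hbnn j k)
        · exact le_refl 0
end

section
/- Let M = (M_x)_{x∈X} be a POVM on ℂ^D and let ψ, ψ⊥ ∈ ℂ^D be unit vectors with ⟨ψ, ψ⊥⟩ = 0. Define ψ₊ := (ψ + ψ⊥)/√2, ψ₋ := (ψ − ψ⊥)/√2 and the nonnegative reals p₊(x) := ⟨ψ₊, M_x ψ₊⟩, p₋(x) := ⟨ψ₋, M_x ψ₋⟩. Then Γ_M(ψ, ψ⊥) ≥ 1 − Σ_{x∈X} √(p₊(x) · p₋(x)). -/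
open Matrix
open scoped Classical ComplexOrder

lemma herm_swap {D : ℕ} {M : Matrix (Fin D) (Fin D) ℂ} (h : Mᴴ = M) (u v : Fin D → ℂ) :
    star v ⬝ᵥ M *ᵥ u = star (star u ⬝ᵥ M *ᵥ v) := by
  rw [star_dotProduct]
  congr 1
  rw [star_mulVec, h, ← dotProduct_mulVec]

lemma B_expand {D : ℕ} (M : Matrix (Fin D) (Fin D) ℂ) (u v : Fin D → ℂ) (z : ℂ) :
    star (u + z • v) ⬝ᵥ M *ᵥ (u + z • v)
      = star u ⬝ᵥ M *ᵥ u + z * (star u ⬝ᵥ M *ᵥ v) + star z * (star v ⬝ᵥ M *ᵥ u)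
        + star z * z * (star v ⬝ᵥ M *ᵥ v) := by
  simp [star_add, star_smul, mulVec_add, mulVec_smul, add_dotProduct, dotProduct_add,
    smul_dotProduct, dotProduct_smul, smul_smul, smul_eq_mul]
  ring

lemma B_scale {D : ℕ} (M : Matrix (Fin D) (Fin D) ℂ) (w : Fin D → ℂ) (r : ℝ) :
    star ((r : ℂ) • w) ⬝ᵥ M *ᵥ ((r : ℂ) • w) = ((r ^ 2 : ℝ) : ℂ) * (star w ⬝ᵥ M *ᵥ w) := by
  simp [star_smul, mulVec_smul, smul_dotProduct, dotProduct_smul, smul_smul, smul_eq_mul]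
  ring

/-- Cauchy–Schwarz for the real part of a psd sesquilinear form. -/
lemma psd_cs {D : ℕ} {M : Matrix (Fin D) (Fin D) ℂ} (hM : M.PosSemidef) (u v : Fin D → ℂ) :
    ((star v ⬝ᵥ M *ᵥ u).re) ^ 2 ≤ (star u ⬝ᵥ M *ᵥ u).re * (star v ⬝ᵥ M *ᵥ v).re := by
  have quad : ∀ t : ℝ, 0 ≤ (star v ⬝ᵥ M *ᵥ v).re * (t * t)
      + (2 * (star v ⬝ᵥ M *ᵥ u).re) * t + (star u ⬝ᵥ M *ᵥ u).re := by
    intro t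
    have h0 := hM.re_dotProduct_nonneg (u + (t : ℂ) • v)
    rw [RCLike.re_to_complex, B_expand] at h0
    have hsw : (star u ⬝ᵥ M *ᵥ v).re = (star v ⬝ᵥ M *ᵥ u).re := by
      rw [herm_swap hM.1 u v]
      simp
    simp only [Complex.star_def, Complex.conj_ofReal, mul_assoc, Complex.add_re,
      Complex.re_ofReal_mul, hsw] at h0
    linarith
  have hd := discrim_le_zero quad
  rw [discrim] at hd
  nlinarith [hd]

lemma key_ineq (a b c : ℝ) (ha : 0 ≤ a) (hb : 0 ≤ b) (hcs : c ^ 2 ≤ a * b) :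
    (a + b) / 2 - Real.sqrt (((a + b) / 2 + c) * ((a + b) / 2 - c))
      ≤ if 0 < a then c ^ 2 / a else 0 := by
  set s := (a + b) / 2 with hs
  have hsnn : 0 ≤ s := by positivity
  have hprod : (s + c) * (s - c) = s ^ 2 - c ^ 2 := by ring
  have hs2 : c ^ 2 ≤ s ^ 2 := by nlinarith [sq_nonneg (a - b)]
  rw [hprod]
  by_cases hA : 0 < a
  · simp only [hA, if_pos]
    by_cases hle : s - c ^ 2 / a ≤ 0
    · have := Real.sqrt_nonneg (s ^ 2 - c ^ 2)
      linarith
    · push_neg at hle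
      have heq : s - c ^ 2 / a = (s * a - c ^ 2) / a := by field_simp
      have h1 : s - c ^ 2 / a ≤ Real.sqrt (s ^ 2 - c ^ 2) := by
        rw [heq] at hle ⊢
        rw [Real.le_sqrt hle.le (by linarith)]
        rw [div_pow, div_le_iff₀ (by positivity)]
        simp only [hs]
        nlinarith [mul_nonneg (sq_nonneg c) (sub_nonneg.mpr hcs)]
      linarith
  · simp only [hA, if_neg, if_false]
    have ha0 : a = 0 := le_antisymm (not_lt.mp hA) ha
    have hc0 : c = 0 := by nlinarith [sq_nonneg c]
    rw [hc0]
    simp [Real.sqrt_sq hsnn]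

lemma sum_B {D : ℕ} {X : Type*} [Fintype X] (M : X → Matrix (Fin D) (Fin D) ℂ)
    (u v : Fin D → ℂ) :
    ∑ x, (star u ⬝ᵥ M x *ᵥ v) = star u ⬝ᵥ ((∑ x, M x) *ᵥ v) := by
  have h1 : (∑ x, M x) *ᵥ v = ∑ x, (M x *ᵥ v) :=
    map_sum (mulVec.addMonoidHomLeft v) M Finset.univ
  rw [h1]
  simp only [dotProduct, Finset.mul_sum, Finset.sum_apply]
  rw [Finset.sum_comm]

/-- Lower bound on the distinguishability functional in terms of the
Bhattacharyya overlap of the outcome distributions of ψ± = (ψ ± ψ⊥)/√2. -/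
theorem gamma_ge_one_sub_bhattacharyya
    {D : ℕ} (hD : 1 ≤ D) {X : Type*} [Fintype X] [Nonempty X]
    (M : X → Matrix (Fin D) (Fin D) ℂ)
    (hpsd : ∀ x, (M x).PosSemidef) (hsum : ∑ x, M x = 1)
    (ψ ψperp : Fin D → ℂ)
    (hψ : star ψ ⬝ᵥ ψ = 1) (hψperp : star ψperp ⬝ᵥ ψperp = 1)
    (horth : star ψ ⬝ᵥ ψperp = 0)
    (ψplus ψminus : Fin D → ℂ)
    (hplus : ψplus = fun i => (ψ i + ψperp i) / (Real.sqrt 2 : ℂ))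
    (hminus : ψminus = fun i => (ψ i - ψperp i) / (Real.sqrt 2 : ℂ)) :
    1 - ∑ x, Real.sqrt (qre M ψplus ψplus x * qre M ψminus ψminus x)
      ≤ Gamma M ψ ψperp := by
  have hherm : ∀ x, (M x)ᴴ = M x := fun x => (hpsd x).1
  have hsw : ∀ x, (star ψ ⬝ᵥ M x *ᵥ ψperp).re = (star ψperp ⬝ᵥ M x *ᵥ ψ).re := by
    intro x
    rw [herm_swap (hherm x)]
    simp
  -- rewrite ψ± as scalar multiples
  have hplus2 : ψplus = (((Real.sqrt 2)⁻¹ : ℝ) : ℂ) • (ψ + (1 : ℂ) • ψperp) := by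
    funext i
    simp [hplus, div_eq_mul_inv, Pi.smul_apply, smul_eq_mul]
    ring
  have hminus2 : ψminus = (((Real.sqrt 2)⁻¹ : ℝ) : ℂ) • (ψ + (-1 : ℂ) • ψperp) := by
    funext i
    simp [hminus, div_eq_mul_inv, Pi.smul_apply, smul_eq_mul, sub_eq_add_neg]
    ring
  have hhalf : ((Real.sqrt 2)⁻¹ : ℝ) ^ 2 = 1 / 2 := by
    rw [inv_pow, Real.sq_sqrt (by norm_num : (0:ℝ) ≤ 2)]
    norm_num
  -- expansions of the ± probabilities
  have hplusval : ∀ x, qre M ψplus ψplus x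
      = (qre M ψ ψ x + qre M ψperp ψperp x) / 2 + qre M ψperp ψ x := by
    intro x
    rw [qre, hplus2, B_scale, B_expand, hhalf]
    simp [qre, Complex.re_ofReal_mul, Complex.add_re, hsw x]
    ring
  have hminusval : ∀ x, qre M ψminus ψminus x
      = (qre M ψ ψ x + qre M ψperp ψperp x) / 2 - qre M ψperp ψ x := by
    intro x
    rw [qre, hminus2, B_scale, B_expand, hhalf]
    simp [qre, Complex.re_ofReal_mul, Complex.add_re, Complex.neg_re, hsw x]
    ring
  -- nonnegativity
  have hA : ∀ x, 0 ≤ qre M ψ ψ x := by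
    intro x
    have := (hpsd x).re_dotProduct_nonneg ψ
    rwa [RCLike.re_to_complex] at this
  have hB : ∀ x, 0 ≤ qre M ψperp ψperp x := by
    intro x
    have := (hpsd x).re_dotProduct_nonneg ψperp
    rwa [RCLike.re_to_complex] at this
  -- Cauchy–Schwarz
  have hCS : ∀ x, (qre M ψperp ψ x) ^ 2 ≤ qre M ψ ψ x * qre M ψperp ψperp x :=
    fun x => psd_cs (hpsd x) ψ ψperp
  -- sums equal one
  have hsumA : ∑ x, qre M ψ ψ x = 1 := by
    simp only [qre, ← Complex.re_sum]
    rw [sum_B, hsum, one_mulVec, hψ]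
    simp
  have hsumB : ∑ x, qre M ψperp ψperp x = 1 := by
    simp only [qre, ← Complex.re_sum]
    rw [sum_B, hsum, one_mulVec, hψperp]
    simp
  -- the main chain
  rw [Gamma, Finset.sum_filter]
  calc 1 - ∑ x, Real.sqrt (qre M ψplus ψplus x * qre M ψminus ψminus x)
      = ∑ x, ((qre M ψ ψ x + qre M ψperp ψperp x) / 2
          - Real.sqrt (((qre M ψ ψ x + qre M ψperp ψperp x) / 2 + qre M ψperp ψ x)
            * ((qre M ψ ψ x + qre M ψperp ψperp x) / 2 - qre M ψperp ψ x))) := by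
        rw [Finset.sum_sub_distrib]
        congr 1
        · rw [← Finset.sum_div, Finset.sum_add_distrib, hsumA, hsumB]
          norm_num
        · exact Finset.sum_congr rfl fun x _ => by rw [hplusval x, hminusval x]
    _ ≤ ∑ x, (if 0 < qre M ψ ψ x then qre M ψperp ψ x ^ 2 / qre M ψ ψ x else 0) :=
        Finset.sum_le_sum fun x _ => key_ineq _ _ _ (hA x) (hB x) (hCS x)
end

section
/- Let d ≥ 2 and let M = (M_x)_{x∈X} be a POVM on ℂ^d that is not information-erasing, i.e. there exists y ∈ X such that M_y is not a complex scalar multiple of the identity matrix. Then there exist unit vectors ζ, ζ⊥ ∈ ℂ^d with ⟨ζ, ζ⊥⟩ = 0 such that Σ_{x∈X} √(⟨ζ, M_x ζ⟩ · ⟨ζ⊥, M_x ζ⊥⟩) < 1. -/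
open Matrix
open scoped Classical ComplexOrder

lemma sqrt_amgm {a b : ℝ} (ha : 0 ≤ a) (hb : 0 ≤ b) :
    Real.sqrt (a * b) ≤ (a + b) / 2 := by
  nlinarith [sq_nonneg (Real.sqrt a - Real.sqrt b), Real.sq_sqrt ha, Real.sq_sqrt hb,
    Real.sqrt_mul ha b, Real.sqrt_nonneg a, Real.sqrt_nonneg b]

lemma sqrt_amgm_strict {a b : ℝ} (ha : 0 ≤ a) (hb : 0 ≤ b) (hab : a ≠ b) :
    Real.sqrt (a * b) < (a + b) / 2 := by
  have h1 : Real.sqrt a ≠ Real.sqrt b := fun h => hab ((Real.sqrt_inj ha hb).mp h)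
  have h2 : (0:ℝ) < (Real.sqrt a - Real.sqrt b) ^ 2 := by
    have := sub_ne_zero.mpr h1
    positivity
  nlinarith [Real.sq_sqrt ha, Real.sq_sqrt hb, Real.sqrt_mul ha b,
    Real.sqrt_nonneg a, Real.sqrt_nonneg b]

/-- A POVM that is not information-erasing (some element is not a
scalar multiple of the identity) admits a pair of orthogonal unit vectors whose
outcome distributions have Bhattacharyya overlap strictly smaller than 1. -/
theorem exists_orthonormal_pair_overlap_lt_one
    {d : ℕ} (hd : 2 ≤ d) {X : Type*} [Fintype X] [Nonempty X]
    (M : X → Matrix (Fin d) (Fin d) ℂ)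
    (hpsd : ∀ x, (M x).PosSemidef) (hsum : ∑ x, M x = 1)
    (y : X) (hy : ∀ c : ℂ, M y ≠ c • (1 : Matrix (Fin d) (Fin d) ℂ)) :
    ∃ ζ ζperp : Fin d → ℂ,
      star ζ ⬝ᵥ ζ = 1 ∧ star ζperp ⬝ᵥ ζperp = 1 ∧ star ζ ⬝ᵥ ζperp = 0 ∧
      ∑ x, Real.sqrt (qre M ζ ζ x * qre M ζperp ζperp x) < 1 := by
  have hH : (M y).IsHermitian := (hpsd y).1
  have i0 : Fin d := ⟨0, by omega⟩
  -- step 1: two distinct eigenvalues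
  have hne : ∃ i j : Fin d, hH.eigenvalues i ≠ hH.eigenvalues j := by
    by_contra h
    push_neg at h
    apply hy ((hH.eigenvalues i0 : ℂ))
    have hdiag : Matrix.diagonal (RCLike.ofReal ∘ hH.eigenvalues) =
        (hH.eigenvalues i0 : ℂ) • (1 : Matrix (Fin d) (Fin d) ℂ) := by
      ext a b
      by_cases hab : a = b
      · subst hab; simp [Matrix.diagonal, h a i0]
      · simp [Matrix.diagonal, hab, Matrix.one_apply_ne hab]
    have hU := (Matrix.mem_unitaryGroup_iff).mp (hH.eigenvectorUnitary).2
    calc M y = _ := hH.spectral_theorem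
      _ = (hH.eigenvalues i0 : ℂ) • (1 : Matrix (Fin d) (Fin d) ℂ) := by
        rw [hdiag, Unitary.conjStarAlgAut_apply, Matrix.mul_smul, Matrix.smul_mul, mul_one, hU]
  obtain ⟨i, j, hij⟩ := hne
  set b := hH.eigenvectorBasis with hb
  have horth := b.orthonormal
  rw [orthonormal_iff_ite] at horth
  refine ⟨⇑(b i), ⇑(b j), ?_, ?_, ?_, ?_⟩
  · have := horth i i
    rw [EuclideanSpace.inner_eq_star_dotProduct] at this
    rw [dotProduct_comm]; simpa using this
  · have := horth j j
    rw [EuclideanSpace.inner_eq_star_dotProduct] at this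
    rw [dotProduct_comm]; simpa using this
  · have hij' : i ≠ j := fun h => hij (by rw [h])
    have := horth i j
    rw [EuclideanSpace.inner_eq_star_dotProduct] at this
    rw [dotProduct_comm]; simpa [hij'] using this
  · set p : X → ℝ := qre M (⇑(b i)) (⇑(b i)) with hp
    set q : X → ℝ := qre M (⇑(b j)) (⇑(b j)) with hq
    have hnorm : ∀ k : Fin d, star ⇑(b k) ⬝ᵥ ⇑(b k) = 1 := by
      intro k
      have := horth k k
      rw [EuclideanSpace.inner_eq_star_dotProduct] at this
      rw [dotProduct_comm]; simpa using this
    -- nonnegativity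
    have hpnn : ∀ x, 0 ≤ p x := fun x => by
      have := (hpsd x).dotProduct_mulVec_nonneg (⇑(b i))
      exact (Complex.le_def.mp this).1
    have hqnn : ∀ x, 0 ≤ q x := fun x => by
      have := (hpsd x).dotProduct_mulVec_nonneg (⇑(b j))
      exact (Complex.le_def.mp this).1
    -- sums are 1
    have hsum_dot : ∀ v : Fin d → ℂ, ∑ x, (star v ⬝ᵥ (M x *ᵥ v)) = star v ⬝ᵥ v := by
      intro v
      have : ∑ x, (star v ⬝ᵥ (M x *ᵥ v)) = star v ⬝ᵥ ((∑ x, M x) *ᵥ v) := by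
        simp only [Matrix.mulVec, dotProduct, Matrix.sum_apply, Finset.sum_mul,
          Finset.mul_sum]
        rw [Finset.sum_comm]
        exact Finset.sum_congr rfl fun k _ => Finset.sum_comm ..
      rw [this, hsum, Matrix.one_mulVec]
    have hpsum : ∑ x, p x = 1 := by
      have := congrArg Complex.re (hsum_dot (⇑(b i)))
      rw [Complex.re_sum, hnorm i] at this
      simpa [hp, qre] using this
    have hqsum : ∑ x, q x = 1 := by
      have := congrArg Complex.re (hsum_dot (⇑(b j)))
      rw [Complex.re_sum, hnorm j] at this
      simpa [hq, qre] using this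
    -- value at y
    have hval : ∀ k : Fin d, qre M (⇑(b k)) (⇑(b k)) y = hH.eigenvalues k := by
      intro k
      unfold qre
      rw [hH.mulVec_eigenvectorBasis, dotProduct_smul]
      have := hnorm k
      rw [this]
      simp [Complex.real_smul]
    have hpy : p y ≠ q y := by
      rw [hp, hq, hval i, hval j]; exact_mod_cast hij
    have key : ∀ x ∈ Finset.univ, Real.sqrt (p x * q x) ≤ (p x + q x) / 2 :=
      fun x _ => sqrt_amgm (hpnn x) (hqnn x)
    have strict : Real.sqrt (p y * q y) < (p y + q y) / 2 :=
      sqrt_amgm_strict (hpnn y) (hqnn y) hpy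
    calc ∑ x, Real.sqrt (p x * q x) < ∑ x, (p x + q x) / 2 :=
          Finset.sum_lt_sum key ⟨y, Finset.mem_univ y, strict⟩
      _ = 1 := by
          rw [← Finset.sum_div, Finset.sum_add_distrib, hpsum, hqsum]; norm_num
end

section
/- Quantitative core of Theorem 1: let M = (M_x)_{x∈X} be a POVM on ℂ^d, let ζ, ζ⊥ ∈ ℂ^d be unit vectors with ⟨ζ, ζ⊥⟩ = 0, and set c := Σ_{x∈X} √(⟨ζ, M_x ζ⟩ · ⟨ζ⊥, M_x ζ⊥⟩). For every N ≥ 1, define the cat states Ψ := (ζ^{⊗N} + ζ⊥^{⊗N})/√2 and Ψ⊥ := (ζ^{⊗N} − ζ⊥^{⊗N})/√2, which are orthogonal unit vectors in ℂ^{(Fin N → Fin d)}. Then Γ_{M^{⊗N}}(Ψ, Ψ⊥) ≥ 1 − c^N. -/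
open Matrix
open scoped Classical ComplexOrder

/-- The N-fold product POVM M^{⊗N} on ℂ^{Fin N → Fin d}. -/
noncomputable def prodPOVM {d : ℕ} {X : Type*} [Fintype X]
    (M : X → Matrix (Fin d) (Fin d) ℂ) (N : ℕ) :
    (Fin N → X) → Matrix (Fin N → Fin d) (Fin N → Fin d) ℂ :=
  fun xs => Matrix.of fun v w => ∏ j, M (xs j) (v j) (w j)

/-- The N-fold product vector ζ^{⊗N}. -/
noncomputable def prodVec {d : ℕ} (ζ : Fin d → ℂ) (N : ℕ) :
    (Fin N → Fin d) → ℂ :=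
  fun v => ∏ j, ζ (v j)

/-! ### Auxiliary lemmas -/

lemma my_sqrt_prod {α : Type*} (s : Finset α) (f : α → ℝ) (h : ∀ i ∈ s, 0 ≤ f i) :
    Real.sqrt (∏ i ∈ s, f i) = ∏ i ∈ s, Real.sqrt (f i) := by
  have h2 : (∏ i ∈ s, Real.sqrt (f i)) ^ 2 = ∏ i ∈ s, f i := by
    rw [← Finset.prod_pow]
    exact Finset.prod_congr rfl fun i hi => Real.sq_sqrt (h i hi)
  rw [← h2, Real.sqrt_sq (Finset.prod_nonneg fun i _ => Real.sqrt_nonneg _)]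

lemma prod_sum_sum {N d : ℕ} (g : Fin N → Fin d → Fin d → ℂ) :
    (∏ j, ∑ a, ∑ b, g j a b)
      = ∑ v : Fin N → Fin d, ∑ w : Fin N → Fin d, ∏ j, g j (v j) (w j) := by
  rw [Fintype.prod_sum]
  exact Finset.sum_congr rfl fun v _ => Fintype.prod_sum _

/-- The sesquilinear form of a product POVM element on product vectors factorizes. -/
lemma prodForm {d N : ℕ} {X : Type*} [Fintype X]
    (M : X → Matrix (Fin d) (Fin d) ℂ) (xs : Fin N → X) (u w : Fin d → ℂ) :
    star (prodVec u N) ⬝ᵥ (prodPOVM M N xs *ᵥ prodVec w N)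
      = ∏ j, star u ⬝ᵥ (M (xs j) *ᵥ w) := by
  have hrhs : ∀ j, star u ⬝ᵥ (M (xs j) *ᵥ w)
      = ∑ a, ∑ b, (starRingEnd ℂ) (u a) * (M (xs j) a b * w b) := by
    intro j
    simp only [dotProduct, mulVec, Pi.star_apply, RCLike.star_def, Finset.mul_sum]
  calc star (prodVec u N) ⬝ᵥ (prodPOVM M N xs *ᵥ prodVec w N)
      = ∑ v : Fin N → Fin d, ∑ w' : Fin N → Fin d,
          ∏ j, (starRingEnd ℂ) (u (v j)) * (M (xs j) (v j) (w' j) * w (w' j)) := by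
        simp only [dotProduct, mulVec, Pi.star_apply, RCLike.star_def, prodPOVM, prodVec,
          Matrix.of_apply, Finset.mul_sum]
        refine Finset.sum_congr rfl fun v _ => Finset.sum_congr rfl fun w' _ => ?_
        simp [Finset.prod_mul_distrib, map_prod]
    _ = ∏ j, ∑ a, ∑ b, (starRingEnd ℂ) (u a) * (M (xs j) a b * w b) :=
        (prod_sum_sum fun j a b => (starRingEnd ℂ) (u a) * (M (xs j) a b * w b)).symm
    _ = ∏ j, star u ⬝ᵥ (M (xs j) *ᵥ w) := Finset.prod_congr rfl fun j _ => (hrhs j).symm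

lemma psd_diag {d : ℕ} {A : Matrix (Fin d) (Fin d) ℂ} (hA : A.PosSemidef) (v : Fin d → ℂ) :
    star v ⬝ᵥ (A *ᵥ v) = ((star v ⬝ᵥ (A *ᵥ v)).re : ℂ) := by
  have him : ((0:ℂ)).im = (star v ⬝ᵥ (A *ᵥ v)).im := (Complex.le_def.mp (hA.dotProduct_mulVec_nonneg v)).2
  exact Complex.ext (by simp) (by simpa using him.symm)

lemma herm_conj {d : ℕ} {A : Matrix (Fin d) (Fin d) ℂ} (hA : A.IsHermitian) (u w : Fin d → ℂ) :
    star w ⬝ᵥ (A *ᵥ u) = (starRingEnd ℂ) (star u ⬝ᵥ (A *ᵥ w)) := by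
  calc star w ⬝ᵥ (A *ᵥ u)
      = star w ⬝ᵥ (Aᴴ *ᵥ u) := by rw [hA.eq]
    _ = (star w ᵥ* Aᴴ) ⬝ᵥ u := dotProduct_mulVec _ _ _
    _ = star (A *ᵥ w) ⬝ᵥ u := by rw [star_mulVec]
    _ = star (star u ⬝ᵥ (A *ᵥ w)) := by rw [star_dotProduct]
    _ = (starRingEnd ℂ) (star u ⬝ᵥ (A *ᵥ w)) := rfl

/-- Cauchy–Schwarz for the sesquilinear form of a positive semidefinite matrix. -/
lemma cs_psd {d : ℕ} {A : Matrix (Fin d) (Fin d) ℂ} (hA : A.PosSemidef) (u w : Fin d → ℂ) :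
    ‖star u ⬝ᵥ (A *ᵥ w)‖
      ≤ Real.sqrt ((star u ⬝ᵥ (A *ᵥ u)).re * (star w ⬝ᵥ (A *ᵥ w)).re) := by
  open scoped MatrixOrder in
  obtain ⟨B, rfl⟩ := CStarAlgebra.nonneg_iff_eq_star_mul_self.mp hA.nonneg
  have hfac : ∀ x y : Fin d → ℂ, star x ⬝ᵥ ((star B * B) *ᵥ y) =
      star (B *ᵥ x) ⬝ᵥ (B *ᵥ y) := by
    intro x y
    rw [← mulVec_mulVec, star_mulVec, ← dotProduct_mulVec]
    rfl
  rw [hfac u w, hfac u u, hfac w w]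
  set a := B *ᵥ u with ha
  set b := B *ᵥ w with hb
  have hnorm : ∀ x : Fin d → ℂ,
      ‖WithLp.toLp 2 x‖ = Real.sqrt ((star x ⬝ᵥ x).re) := by
    intro x
    rw [norm_eq_sqrt_re_inner (𝕜 := ℂ), EuclideanSpace.inner_toLp_toLp, dotProduct_comm]
    rfl
  have h0 : ∀ x : Fin d → ℂ, 0 ≤ (star x ⬝ᵥ x).re := by
    intro x
    have h := inner_self_eq_norm_sq (𝕜 := ℂ) (WithLp.toLp 2 x)
    rw [EuclideanSpace.inner_toLp_toLp, dotProduct_comm] at h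
    rw [show (star x ⬝ᵥ x).re = RCLike.re (star x ⬝ᵥ x) from rfl, h]
    positivity
  have h1 := norm_inner_le_norm (𝕜 := ℂ)
    (WithLp.toLp 2 a) (WithLp.toLp 2 b)
  rw [EuclideanSpace.inner_toLp_toLp, dotProduct_comm, hnorm a, hnorm b,
    ← Real.sqrt_mul (h0 a)] at h1
  exact h1

lemma cat_expand_plus {n : Type*} [Fintype n] (Mp : Matrix n n ℂ) (u w : n → ℂ) (t : ℂ)
    (ht : t * t = 2) (htne : t ≠ 0) (hconj : (starRingEnd ℂ) t = t) :
    star (t⁻¹ • (u + w)) ⬝ᵥ (Mp *ᵥ (t⁻¹ • (u + w)))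
      = ((star u ⬝ᵥ (Mp *ᵥ u)) + (star u ⬝ᵥ (Mp *ᵥ w))
          + ((star w ⬝ᵥ (Mp *ᵥ u)) + (star w ⬝ᵥ (Mp *ᵥ w)))) / 2 := by
  simp only [star_smul, smul_dotProduct, mulVec_smul, dotProduct_smul, star_add,
    mulVec_add, add_dotProduct, dotProduct_add, smul_eq_mul, RCLike.star_def, map_inv₀, hconj,
    Pi.smul_apply]
  field_simp
  linear_combination (-1) * (star u ⬝ᵥ Mp *ᵥ u + star u ⬝ᵥ Mp *ᵥ w +
    (star w ⬝ᵥ Mp *ᵥ u + star w ⬝ᵥ Mp *ᵥ w)) * ht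

lemma cat_expand_minus {n : Type*} [Fintype n] (Mp : Matrix n n ℂ) (u w : n → ℂ) (t : ℂ)
    (ht : t * t = 2) (htne : t ≠ 0) (hconj : (starRingEnd ℂ) t = t) :
    star (t⁻¹ • (u - w)) ⬝ᵥ (Mp *ᵥ (t⁻¹ • (u + w)))
      = ((star u ⬝ᵥ (Mp *ᵥ u)) + (star u ⬝ᵥ (Mp *ᵥ w))
          - ((star w ⬝ᵥ (Mp *ᵥ u)) + (star w ⬝ᵥ (Mp *ᵥ w)))) / 2 := by
  simp only [star_smul, smul_dotProduct, mulVec_smul, dotProduct_smul, star_add, star_sub,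
    mulVec_add, add_dotProduct, dotProduct_add, sub_dotProduct, mulVec_sub, dotProduct_sub,
    smul_eq_mul, RCLike.star_def, map_inv₀, hconj, Pi.smul_apply]
  field_simp
  linear_combination (-1) * (star u ⬝ᵥ Mp *ᵥ u + star u ⬝ᵥ Mp *ᵥ w -
    (star w ⬝ᵥ Mp *ᵥ u + star w ⬝ᵥ Mp *ᵥ w)) * ht

lemma sum_qre_eq {d : ℕ} {X : Type*} [Fintype X]
    (M : X → Matrix (Fin d) (Fin d) ℂ) (hsum : ∑ x, M x = 1) (v : Fin d → ℂ) :
    ∑ x, qre M v v x = (star v ⬝ᵥ v).re := by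
  unfold qre
  rw [← Complex.re_sum]
  congr 1
  have h : ∑ x, star v ⬝ᵥ (M x *ᵥ v) = star v ⬝ᵥ ((∑ x, M x) *ᵥ v) :=
    (map_sum (AddMonoidHom.mk' (fun B : Matrix (Fin d) (Fin d) ℂ => star v ⬝ᵥ (B *ᵥ v))
      (fun B C => by show star v ⬝ᵥ ((B + C) *ᵥ v) = star v ⬝ᵥ (B *ᵥ v) + star v ⬝ᵥ (C *ᵥ v); rw [add_mulVec, dotProduct_add])) M Finset.univ).symm
  rw [h, hsum, one_mulVec]

set_option maxHeartbeats 2000000 in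
/-- quantitative core of Theorem 1: for the cat states built from an
orthonormal pair ζ, ζ⊥, the distinguishability functional of the product POVM
M^{⊗N} is at least 1 − c^N with c the single-copy Bhattacharyya overlap. -/
theorem gamma_prod_cat_ge
    {d : ℕ} (hd : 1 ≤ d) {X : Type*} [Fintype X] [Nonempty X]
    (M : X → Matrix (Fin d) (Fin d) ℂ)
    (hpsd : ∀ x, (M x).PosSemidef) (hsum : ∑ x, M x = 1)
    (ζ ζperp : Fin d → ℂ)
    (hζ : star ζ ⬝ᵥ ζ = 1) (hζperp : star ζperp ⬝ᵥ ζperp = 1)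
    (horth : star ζ ⬝ᵥ ζperp = 0)
    (c : ℝ) (hc : c = ∑ x, Real.sqrt (qre M ζ ζ x * qre M ζperp ζperp x))
    (N : ℕ) (hN : 1 ≤ N)
    (Ψ Ψperp : (Fin N → Fin d) → ℂ)
    (hΨ : Ψ = fun v => (prodVec ζ N v + prodVec ζperp N v) / (Real.sqrt 2 : ℂ))
    (hΨperp : Ψperp = fun v =>
      (prodVec ζ N v - prodVec ζperp N v) / (Real.sqrt 2 : ℂ)) :
    1 - c ^ N ≤ Gamma (prodPOVM M N) Ψ Ψperp := by
  classical
  -- single-copy probabilities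
  have hp0 : ∀ x, 0 ≤ qre M ζ ζ x := fun x => (hpsd x).re_dotProduct_nonneg ζ
  have hq0 : ∀ x, 0 ≤ qre M ζperp ζperp x := fun x => (hpsd x).re_dotProduct_nonneg ζperp
  set P : (Fin N → X) → ℝ := fun xs => ∏ j, qre M ζ ζ (xs j) with hPdef
  set Q : (Fin N → X) → ℝ := fun xs => ∏ j, qre M ζperp ζperp (xs j) with hQdef
  have hP0 : ∀ xs, 0 ≤ P xs := fun xs => Finset.prod_nonneg fun j _ => hp0 _
  have hQ0 : ∀ xs, 0 ≤ Q xs := fun xs => Finset.prod_nonneg fun j _ => hq0 _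
  -- the diagonal product forms
  have huu : ∀ xs : Fin N → X,
      star (prodVec ζ N) ⬝ᵥ (prodPOVM M N xs *ᵥ prodVec ζ N) = ((P xs : ℝ) : ℂ) := by
    intro xs
    rw [prodForm, hPdef]
    push_cast
    exact Finset.prod_congr rfl fun j _ => psd_diag (hpsd (xs j)) ζ
  have hww : ∀ xs : Fin N → X,
      star (prodVec ζperp N) ⬝ᵥ (prodPOVM M N xs *ᵥ prodVec ζperp N) = ((Q xs : ℝ) : ℂ) := by
    intro xs
    rw [prodForm, hQdef]
    push_cast
    exact Finset.prod_congr rfl fun j _ => psd_diag (hpsd (xs j)) ζperp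
  have hwu : ∀ xs : Fin N → X,
      star (prodVec ζperp N) ⬝ᵥ (prodPOVM M N xs *ᵥ prodVec ζ N)
        = (starRingEnd ℂ) (star (prodVec ζ N) ⬝ᵥ (prodPOVM M N xs *ᵥ prodVec ζperp N)) := by
    intro xs
    rw [prodForm, prodForm, map_prod]
    exact Finset.prod_congr rfl fun j _ => herm_conj (hpsd (xs j)).1 ζ ζperp
  have habs : ∀ xs : Fin N → X,
      ‖star (prodVec ζ N) ⬝ᵥ (prodPOVM M N xs *ᵥ prodVec ζperp N)‖
        ≤ Real.sqrt (P xs * Q xs) := by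
    intro xs
    rw [prodForm, norm_prod]
    calc ∏ j, ‖star ζ ⬝ᵥ (M (xs j) *ᵥ ζperp)‖
        ≤ ∏ j, Real.sqrt (qre M ζ ζ (xs j) * qre M ζperp ζperp (xs j)) :=
          Finset.prod_le_prod (fun j _ => norm_nonneg _)
            (fun j _ => cs_psd (hpsd (xs j)) ζ ζperp)
      _ = Real.sqrt (P xs * Q xs) := by
          rw [← my_sqrt_prod _ _ (fun j _ => mul_nonneg (hp0 _) (hq0 _)),
            Finset.prod_mul_distrib]
  -- cat-state expansions
  have ht0 : (0:ℝ) < Real.sqrt 2 := Real.sqrt_pos.mpr (by norm_num)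
  have htne : ((Real.sqrt 2 : ℝ) : ℂ) ≠ 0 := by
    simpa using ht0.ne'
  have ht2 : ((Real.sqrt 2 : ℝ) : ℂ) * ((Real.sqrt 2 : ℝ) : ℂ) = 2 := by
    rw [← Complex.ofReal_mul, Real.mul_self_sqrt (by norm_num)]
    norm_num
  have hΨ' : Ψ = (((Real.sqrt 2 : ℝ) : ℂ))⁻¹ • (prodVec ζ N + prodVec ζperp N) := by
    funext v
    simp [hΨ, div_eq_inv_mul]
  have hΨperp' : Ψperp = (((Real.sqrt 2 : ℝ) : ℂ))⁻¹ • (prodVec ζ N - prodVec ζperp N) := by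
    funext v
    simp [hΨperp, div_eq_inv_mul]
  -- the two key per-outcome facts
  have hDn : ∀ xs : Fin N → X,
      ((P xs + Q xs - 2 * Real.sqrt (P xs * Q xs)) / 2 ≤ qre (prodPOVM M N) Ψ Ψ xs
        ∧ qre (prodPOVM M N) Ψ Ψ xs ≤ (P xs + Q xs + 2 * Real.sqrt (P xs * Q xs)) / 2)
      ∧ qre (prodPOVM M N) Ψperp Ψ xs = (P xs - Q xs) / 2 := by
    intro xs
    set A := star (prodVec ζ N) ⬝ᵥ (prodPOVM M N xs *ᵥ prodVec ζperp N) with hAdef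
    have hconj2 : (starRingEnd ℂ) ((Real.sqrt 2 : ℝ) : ℂ) = ((Real.sqrt 2 : ℝ) : ℂ) :=
      Complex.conj_ofReal _
    have hDval : qre (prodPOVM M N) Ψ Ψ xs = (P xs + Q xs + 2 * A.re) / 2 := by
      show (star Ψ ⬝ᵥ (prodPOVM M N xs *ᵥ Ψ)).re = _
      rw [hΨ', cat_expand_plus _ _ _ _ ht2 htne hconj2, huu xs, hww xs, hwu xs, ← hAdef]
      rw [show ((P xs : ℝ) : ℂ) + A + ((starRingEnd ℂ) A + ((Q xs : ℝ) : ℂ))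
          = ((P xs : ℝ) : ℂ) + ((Q xs : ℝ) : ℂ) + (A + (starRingEnd ℂ) A) by ring]
      rw [Complex.add_conj]
      rw [show (((P xs : ℝ) : ℂ) + ((Q xs : ℝ) : ℂ) + ((2 * A.re : ℝ) : ℂ)) / 2
          = (((P xs + Q xs + 2 * A.re) / 2 : ℝ) : ℂ) by push_cast; ring]
      exact Complex.ofReal_re _
    have hnval : qre (prodPOVM M N) Ψperp Ψ xs = (P xs - Q xs) / 2 := by
      show (star Ψperp ⬝ᵥ (prodPOVM M N xs *ᵥ Ψ)).re = _
      rw [hΨ', hΨperp', cat_expand_minus _ _ _ _ ht2 htne hconj2, huu xs, hww xs, hwu xs,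
        ← hAdef]
      rw [show ((P xs : ℝ) : ℂ) + A - ((starRingEnd ℂ) A + ((Q xs : ℝ) : ℂ))
          = ((P xs : ℝ) : ℂ) - ((Q xs : ℝ) : ℂ) + (A - (starRingEnd ℂ) A) by ring]
      rw [Complex.sub_conj]
      rw [show (((P xs : ℝ) : ℂ) - ((Q xs : ℝ) : ℂ) + ((2 * A.im : ℝ) : ℂ) * Complex.I) / 2
          = (((P xs - Q xs) / 2 : ℝ) : ℂ) + ((A.im : ℝ) : ℂ) * Complex.I by push_cast; ring]
      simp
    have hre : |A.re| ≤ Real.sqrt (P xs * Q xs) :=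
      (Complex.abs_re_le_norm A).trans (habs xs)
    have hre' := abs_le.mp hre
    refine ⟨⟨?_, ?_⟩, hnval⟩
    · rw [hDval]; linarith [hre'.1]
    · rw [hDval]; linarith [hre'.2]
  -- global sums
  have hsp : ∑ x, qre M ζ ζ x = 1 := by
    rw [sum_qre_eq M hsum ζ, hζ]; rfl
  have hsq : ∑ x, qre M ζperp ζperp x = 1 := by
    rw [sum_qre_eq M hsum ζperp, hζperp]; rfl
  have hsumP : ∑ xs : Fin N → X, P xs = 1 := by
    calc ∑ xs : Fin N → X, ∏ j, qre M ζ ζ (xs j)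
        = ∏ _j : Fin N, ∑ x, qre M ζ ζ x :=
          (Fintype.prod_sum (fun (_ : Fin N) (x : X) => qre M ζ ζ x)).symm
      _ = 1 := by rw [Finset.prod_congr rfl fun j _ => hsp, Finset.prod_const_one]
  have hsumQ : ∑ xs : Fin N → X, Q xs = 1 := by
    calc ∑ xs : Fin N → X, ∏ j, qre M ζperp ζperp (xs j)
        = ∏ _j : Fin N, ∑ x, qre M ζperp ζperp x :=
          (Fintype.prod_sum (fun (_ : Fin N) (x : X) => qre M ζperp ζperp x)).symm
      _ = 1 := by rw [Finset.prod_congr rfl fun j _ => hsq, Finset.prod_const_one]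
  have hsumr : ∑ xs : Fin N → X, Real.sqrt (P xs * Q xs) = c ^ N := by
    have hterm : ∀ xs : Fin N → X, Real.sqrt (P xs * Q xs)
        = ∏ j, Real.sqrt (qre M ζ ζ (xs j) * qre M ζperp ζperp (xs j)) := by
      intro xs
      rw [hPdef, hQdef]
      simp only
      rw [← Finset.prod_mul_distrib,
        my_sqrt_prod _ _ (fun j _ => mul_nonneg (hp0 _) (hq0 _))]
    calc ∑ xs : Fin N → X, Real.sqrt (P xs * Q xs)
        = ∑ xs : Fin N → X, ∏ j, Real.sqrt (qre M ζ ζ (xs j) * qre M ζperp ζperp (xs j)) :=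
          Finset.sum_congr rfl fun xs _ => hterm xs
      _ = ∏ _j : Fin N, ∑ x, Real.sqrt (qre M ζ ζ x * qre M ζperp ζperp x) :=
          (Fintype.prod_sum (fun (_ : Fin N) (x : X) =>
            Real.sqrt (qre M ζ ζ x * qre M ζperp ζperp x))).symm
      _ = ∏ _j : Fin N, c := Finset.prod_congr rfl fun j _ => by rw [hc]
      _ = c ^ N := by rw [Finset.prod_const, Finset.card_univ, Fintype.card_fin]
  -- the lower-bound function
  set g : (Fin N → X) → ℝ :=
    fun xs => (Real.sqrt (P xs) - Real.sqrt (Q xs)) ^ 2 / 2 with hgdef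
  have hg_eq : ∀ xs, g xs = (P xs + Q xs) / 2 - Real.sqrt (P xs * Q xs) := by
    intro xs
    have h3 : Real.sqrt (P xs) ^ 2 = P xs := Real.sq_sqrt (hP0 xs)
    have h4 : Real.sqrt (Q xs) ^ 2 = Q xs := Real.sq_sqrt (hQ0 xs)
    rw [hgdef]
    simp only
    rw [Real.sqrt_mul (hP0 xs)]
    linear_combination (h3 + h4) / 2
  have hg0 : ∀ xs, 0 ≤ g xs := fun xs => div_nonneg (sq_nonneg _) (by norm_num)
  have hsum_g : ∑ xs : Fin N → X, g xs = 1 - c ^ N := by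
    rw [Finset.sum_congr rfl fun xs _ => hg_eq xs, Finset.sum_sub_distrib, hsumr]
    have h5 : ∑ xs : Fin N → X, (P xs + Q xs) / 2 = 1 := by
      rw [← Finset.sum_div, Finset.sum_add_distrib, hsumP, hsumQ]
      norm_num
    rw [h5]
  -- per-outcome comparison on the support
  have hmain : ∀ xs : Fin N → X, 0 < qre (prodPOVM M N) Ψ Ψ xs →
      g xs ≤ (qre (prodPOVM M N) Ψperp Ψ xs) ^ 2 / qre (prodPOVM M N) Ψ Ψ xs := by
    intro xs hpos
    obtain ⟨⟨hlow, hup⟩, hnval⟩ := hDn xs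
    set D := qre (prodPOVM M N) Ψ Ψ xs with hDdef
    set sP := Real.sqrt (P xs) with hsP
    set sQ := Real.sqrt (Q xs) with hsQ
    have h3 : sP ^ 2 = P xs := Real.sq_sqrt (hP0 xs)
    have h4 : sQ ^ 2 = Q xs := Real.sq_sqrt (hQ0 xs)
    have hr : Real.sqrt (P xs * Q xs) = sP * sQ := Real.sqrt_mul (hP0 xs) _
    have hE : D ≤ (sP + sQ) ^ 2 / 2 := by
      rw [hr] at hup
      nlinarith [hup]
    have hs0 : 0 ≤ sP := Real.sqrt_nonneg _
    have hs1 : 0 ≤ sQ := Real.sqrt_nonneg _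
    have hEpos : 0 < (sP + sQ) ^ 2 / 2 := lt_of_lt_of_le hpos hE
    have hsne : sP + sQ ≠ 0 := by
      intro h
      rw [h] at hEpos
      norm_num at hEpos
    have step : ((P xs - Q xs) / 2) ^ 2 / ((sP + sQ) ^ 2 / 2)
        ≤ ((P xs - Q xs) / 2) ^ 2 / D :=
      div_le_div_of_nonneg_left (sq_nonneg _) hpos hE
    have hPQ : P xs - Q xs = (sP - sQ) * (sP + sQ) := by
      rw [← h3, ← h4]; ring
    have heq : ((P xs - Q xs) / 2) ^ 2 / ((sP + sQ) ^ 2 / 2) = (sP - sQ) ^ 2 / 2 := by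
      rw [hPQ]
      field_simp
    rw [hnval]
    calc g xs = (sP - sQ) ^ 2 / 2 := rfl
      _ = ((P xs - Q xs) / 2) ^ 2 / ((sP + sQ) ^ 2 / 2) := heq.symm
      _ ≤ ((P xs - Q xs) / 2) ^ 2 / D := step
  -- terms outside the support give 0
  have hzero : ∀ xs : Fin N → X, ¬ 0 < qre (prodPOVM M N) Ψ Ψ xs → g xs = 0 := by
    intro xs hneg
    obtain ⟨⟨hlow, _⟩, _⟩ := hDn xs
    have hle := not_lt.mp hneg
    have h2 : g xs ≤ qre (prodPOVM M N) Ψ Ψ xs := by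
      rw [hg_eq xs]
      linarith [hlow]
    have := hg0 xs
    linarith
  -- assemble
  unfold Gamma
  have h2 : ∑ xs : Fin N → X, g xs
      = ∑ xs ∈ Finset.univ.filter (fun xs => 0 < qre (prodPOVM M N) Ψ Ψ xs), g xs := by
    rw [← Finset.sum_filter_add_sum_filter_not Finset.univ
      (fun xs => 0 < qre (prodPOVM M N) Ψ Ψ xs) g]
    have hz : ∑ xs ∈ Finset.univ.filter
        (fun xs => ¬ 0 < qre (prodPOVM M N) Ψ Ψ xs), g xs = 0 :=
      Finset.sum_eq_zero fun xs hxs => hzero xs (Finset.mem_filter.mp hxs).2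
    rw [hz, add_zero]
  have h1 : ∑ xs ∈ Finset.univ.filter (fun xs => 0 < qre (prodPOVM M N) Ψ Ψ xs), g xs
      ≤ ∑ xs ∈ Finset.univ.filter (fun xs => 0 < qre (prodPOVM M N) Ψ Ψ xs),
          (qre (prodPOVM M N) Ψperp Ψ xs) ^ 2 / qre (prodPOVM M N) Ψ Ψ xs :=
    Finset.sum_le_sum fun xs hxs => hmain xs (Finset.mem_filter.mp hxs).2
  linarith [h1, h2.symm.trans_le (le_of_eq rfl), hsum_g]
end

section
/- Moment-based lower bound on the Fisher information: let X be a nonempty finite set, q : X → ℝ with q(x) > 0 for all x, u : X → ℝ arbitrary, w : X → ℝ, and K ∈ ℕ. Define the (K+1)×(K+1) real moment matrix A by A_{jk} := Σ_{x∈X} q(x)·w(x)^{j+k} (for j, k ∈ {0, …, K}) and the vector b by b_j := Σ_{x∈X} u(x)·w(x)^j. If A is positive definite, then bᵀ A⁻¹ b ≤ Σ_{x∈X} u(x)² / q(x). -/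
open Matrix
open scoped Classical

/-- Moment-based lower bound on the classical Fisher information:
if A is the (positive definite) (K+1)×(K+1) Hankel moment matrix of w under the
positive weight q, and b the vector of moments of the derivative u, then
bᵀ A⁻¹ b ≤ Σ_x u(x)²/q(x). -/
theorem moment_lower_bound_fisher
    {X : Type*} [Fintype X] [Nonempty X]
    (q u w : X → ℝ) (hq : ∀ x, 0 < q x) (K : ℕ)
    (A : Matrix (Fin (K + 1)) (Fin (K + 1)) ℝ)
    (hA : ∀ j k, A j k = ∑ x, q x * w x ^ ((j : ℕ) + (k : ℕ)))
    (b : Fin (K + 1) → ℝ)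
    (hb : ∀ j, b j = ∑ x, u x * w x ^ (j : ℕ))
    (hApd : A.PosDef) :
    b ⬝ᵥ (A⁻¹ *ᵥ b) ≤ ∑ x, (u x) ^ 2 / q x := by
  set c : Fin (K + 1) → ℝ := A⁻¹ *ᵥ b with hc
  have hAc : A *ᵥ c = b := by
    rw [hc, Matrix.mulVec_mulVec, Matrix.mul_nonsing_inv A hApd.det_pos.ne'.isUnit,
      Matrix.one_mulVec]
  set p : X → ℝ := fun x => ∑ j, c j * w x ^ (j : ℕ) with hp
  set t : ℝ := b ⬝ᵥ c with ht
  -- t as a cross sum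
  have h1 : t = ∑ x, u x * p x := by
    rw [ht, dotProduct]
    simp_rw [hb, hp, Finset.sum_mul, Finset.mul_sum]
    rw [Finset.sum_comm]
    congr 1; ext x; congr 1; ext j; ring
  -- t as a weighted square sum
  have h2 : t = ∑ x, q x * p x ^ 2 := by
    have key : ∀ x : X, q x * p x ^ 2
        = ∑ j : Fin (K + 1), ∑ k : Fin (K + 1),
            c j * (q x * w x ^ ((j : ℕ) + (k : ℕ)) * c k) := by
      intro x
      rw [hp]
      simp only [sq]
      rw [Finset.sum_mul_sum, Finset.mul_sum]
      refine Finset.sum_congr rfl fun j _ => ?_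
      rw [Finset.mul_sum]
      refine Finset.sum_congr rfl fun k _ => ?_
      rw [pow_add]; ring
    calc t = c ⬝ᵥ (A *ᵥ c) := by rw [hAc, ht, dotProduct_comm]
      _ = ∑ j : Fin (K + 1), ∑ k : Fin (K + 1), c j * (A j k * c k) := by
          simp [dotProduct, Matrix.mulVec, Finset.mul_sum]
      _ = ∑ j : Fin (K + 1), ∑ k : Fin (K + 1), ∑ x : X,
            c j * (q x * w x ^ ((j : ℕ) + (k : ℕ)) * c k) := by
          simp_rw [hA, Finset.sum_mul, Finset.mul_sum]
      _ = ∑ x : X, ∑ j : Fin (K + 1), ∑ k : Fin (K + 1),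
            c j * (q x * w x ^ ((j : ℕ) + (k : ℕ)) * c k) := by
          rw [Finset.sum_congr rfl fun j (_ : j ∈ Finset.univ) =>
            (Finset.sum_comm (γ := Fin (K + 1)) (α := X)
              (f := fun k x => c j * (q x * w x ^ ((j : ℕ) + (k : ℕ)) * c k)))]
          exact Finset.sum_comm
      _ = ∑ x, q x * p x ^ 2 :=
          Finset.sum_congr rfl fun x _ => (key x).symm
  -- Cauchy-Schwarz
  have hcs : t ^ 2 ≤ (∑ x, u x ^ 2 / q x) * t := by
    have key := Finset.sum_mul_sq_le_sq_mul_sq Finset.univ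
      (fun x => u x / Real.sqrt (q x)) (fun x => Real.sqrt (q x) * p x)
    have e1 : ∀ x : X, u x / Real.sqrt (q x) * (Real.sqrt (q x) * p x) = u x * p x := by
      intro x
      have hs : Real.sqrt (q x) ≠ 0 := (Real.sqrt_pos.2 (hq x)).ne'
      field_simp
    have e2 : ∀ x : X, (u x / Real.sqrt (q x)) ^ 2 = u x ^ 2 / q x := by
      intro x
      rw [div_pow, Real.sq_sqrt (hq x).le]
    have e3 : ∀ x : X, (Real.sqrt (q x) * p x) ^ 2 = q x * p x ^ 2 := by
      intro x
      rw [mul_pow, Real.sq_sqrt (hq x).le]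
    simp_rw [e1, e2, e3] at key
    rw [← h1, ← h2] at key
    exact key
  have hF : 0 ≤ ∑ x, u x ^ 2 / q x :=
    Finset.sum_nonneg fun x _ => div_nonneg (sq_nonneg _) (hq x).le
  show t ≤ ∑ x, u x ^ 2 / q x
  rcases le_or_gt t 0 with h | h
  · linarith
  · nlinarith
end

section
/- Optimal two-bin Fisher information: let p, q ∈ ℝ with 0 < q ≤ p < 1 and p + q > 1, and set η := p + q − 1 and δ := p − q. Then the value 1 − (√(p(1−q)) + √(q(1−p)))² is the greatest element of the set { η²·cos²φ / (1 − (δ + η·sin φ)²) : φ ∈ ℝ }; i.e. for every φ ∈ ℝ one has η²·cos²φ / (1 − (δ + η·sin φ)²) ≤ 1 − (√(p(1−q)) + √(q(1−p)))², and some φ attains equality. -/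
set_option maxHeartbeats 1600000


/-- Optimal two-bin Fisher information: for 0 < q ≤ p < 1 with
p + q > 1, setting η = p + q − 1 and δ = p − q, the value
1 − (√(p(1−q)) + √(q(1−p)))² is the greatest element of the set of values
η²cos²φ/(1 − (δ + η sin φ)²) as φ ranges over ℝ. -/
theorem twobin_optimal_fisher (p q : ℝ)
    (hq0 : 0 < q) (hqp : q ≤ p) (hp1 : p < 1) (hpq : 1 < p + q) :
    IsGreatest
      { y : ℝ | ∃ φ : ℝ,
          y = (p + q - 1) ^ 2 * Real.cos φ ^ 2
            / (1 - ((p - q) + (p + q - 1) * Real.sin φ) ^ 2) }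
      (1 - (Real.sqrt (p * (1 - q)) + Real.sqrt (q * (1 - p))) ^ 2) := by
  have hq1 : q < 1 := by linarith
  have hp0 : 0 < p := by linarith
  have hp2 : 1/2 < p := by linarith
  set a := Real.sqrt (p * (1 - q)) with ha_def
  set b := Real.sqrt (q * (1 - p)) with hb_def
  have ha : a ^ 2 = p * (1 - q) := Real.sq_sqrt (by nlinarith)
  have hb : b ^ 2 = q * (1 - p) := Real.sq_sqrt (by nlinarith)
  have ha0 : 0 < a := Real.sqrt_pos.mpr (by nlinarith)
  have hb0 : 0 < b := Real.sqrt_pos.mpr (by nlinarith)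
  have hab0 : 0 ≤ a * b := by positivity
  have hw : (a * b) ^ 2 = (p * (1 - q)) * (q * (1 - p)) := by
    rw [mul_pow, ha, hb]
  have he : (a + b) ^ 2 = p + q - 2 * p * q + 2 * (a * b) := by
    linear_combination ha + hb
  set η := p + q - 1 with hη
  set δ := p - q with hδ
  have hη0 : 0 < η := by simp [hη]; linarith
  have hδ0 : 0 ≤ δ := by simp [hδ]; linarith
  set M := 1 - (a + b) ^ 2 with hM
  -- key identity
  have key : ∀ s : ℝ,
      (a + b) ^ 2 * (M * (1 - (δ + η * s) ^ 2) - η ^ 2 * (1 - s ^ 2))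
        = (η * (a + b) ^ 2 * s - M * δ) ^ 2 := by
    intro s
    rw [hM, he, hη, hδ]
    linear_combination (-4 : ℝ) * hw
  have he0 : 0 < (a + b) ^ 2 := by positivity
  -- denominator positivity
  have hD : ∀ s : ℝ, -1 ≤ s → s ≤ 1 → 0 < 1 - (δ + η * s) ^ 2 := by
    intro s hs1 hs2
    have h1 : δ + η * s ≤ 2 * p - 1 := by
      have := mul_le_mul_of_nonneg_left hs2 (le_of_lt hη0)
      simp [hδ, hη] at this ⊢; nlinarith
    have h2 : 1 - 2 * q ≤ δ + η * s := by
      have := mul_le_mul_of_nonneg_left hs1 (le_of_lt hη0)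
      simp [hδ, hη] at this ⊢; nlinarith
    nlinarith
  -- upper bound
  have hub : ∀ φ : ℝ,
      η ^ 2 * Real.cos φ ^ 2 / (1 - (δ + η * Real.sin φ) ^ 2) ≤ M := by
    intro φ
    have hD' := hD (Real.sin φ) (Real.neg_one_le_sin φ) (Real.sin_le_one φ)
    rw [div_le_iff₀ hD']
    have hcos : Real.cos φ ^ 2 = 1 - Real.sin φ ^ 2 := by
      rw [Real.cos_sq']
    rw [hcos]
    have h2 : 0 ≤ (a + b) ^ 2 *
        (M * (1 - (δ + η * Real.sin φ) ^ 2) - η ^ 2 * (1 - Real.sin φ ^ 2)) := by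
      rw [key (Real.sin φ)]; positivity
    have h3 := (mul_nonneg_iff_of_pos_left he0).mp h2
    linarith
  constructor
  · -- membership
    set s₀ := M * δ / (η * (a + b) ^ 2) with hs₀
    have hden : 0 < η * (a + b) ^ 2 := by positivity
    have hM0 : 0 ≤ M := by
      have h0 := hub (Real.pi / 2)
      simpa using h0
    have hs₀0 : 0 ≤ s₀ := by
      apply div_nonneg (mul_nonneg hM0 hδ0) (le_of_lt hden)
    -- s₀ ≤ 1 : need M*δ ≤ η*(a+b)^2
    have hkey2 : p * (1 - p) * (1 - 2 * q) ≤ a * b * (2 * p - 1) := by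
      have hX0 : 0 ≤ a * b * (2 * p - 1) := mul_nonneg hab0 (by linarith)
      rcases le_or_gt (1 - 2 * q) 0 with h | h
      · calc p * (1 - p) * (1 - 2 * q) ≤ 0 :=
              mul_nonpos_of_nonneg_of_nonpos (mul_nonneg hp0.le (by linarith)) h
          _ ≤ a * b * (2 * p - 1) := hX0
      · have hw' : (a * b * (2 * p - 1)) ^ 2
            = p * (1 - q) * (q * (1 - p)) * (2 * p - 1) ^ 2 := by
          linear_combination (2 * p - 1) ^ 2 * hw
        have hX2 : (p * (1 - p) * (1 - 2 * q)) ^ 2 ≤ (a * b * (2 * p - 1)) ^ 2 := by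
          nlinarith [hw', mul_nonneg (mul_nonneg (mul_nonneg hp0.le
            (show (0:ℝ) ≤ 1 - p by linarith)) (show (0:ℝ) ≤ p - q by linarith))
            (show (0:ℝ) ≤ p + q - 1 by linarith)]
        nlinarith [hX2, hX0, mul_nonneg (mul_nonneg (mul_nonneg hp0.le
          (show (0:ℝ) ≤ 1 - p by linarith)) h.le) hX0]
    have hnum : M * δ ≤ η * (a + b) ^ 2 := by
      rw [hM, he, hη, hδ]; nlinarith [hkey2]
    have hs₀1 : s₀ ≤ 1 := by
      rw [hs₀, div_le_one hden]; exact hnum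
    refine ⟨Real.arcsin s₀, ?_⟩
    have hsin : Real.sin (Real.arcsin s₀) = s₀ :=
      Real.sin_arcsin (by linarith) hs₀1
    have hcos : Real.cos (Real.arcsin s₀) ^ 2 = 1 - s₀ ^ 2 := by
      rw [Real.cos_arcsin]
      exact Real.sq_sqrt (by nlinarith)
    rw [hsin, hcos]
    have hD0 : 0 < 1 - (δ + η * s₀) ^ 2 := hD s₀ (by linarith) hs₀1
    have hzero : η * (a + b) ^ 2 * s₀ - M * δ = 0 := by
      rw [hs₀]; field_simp; ring
    have hk := key s₀
    rw [hzero] at hk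
    have heq : M * (1 - (δ + η * s₀) ^ 2) = η ^ 2 * (1 - s₀ ^ 2) := by
      have h2 : (a + b) ^ 2 * (M * (1 - (δ + η * s₀) ^ 2) - η ^ 2 * (1 - s₀ ^ 2)) = 0 := by
        rw [hk]; ring
      rcases mul_eq_zero.mp h2 with h | h
      · exact absurd h (ne_of_gt he0)
      · linarith
    rw [eq_div_iff (ne_of_gt hD0)]
    linarith [heq]
  · -- upper bound
    rintro y ⟨φ, rfl⟩
    exact hub φ
end

section
/- White-noise upper bound: let M = (M_x)_{x∈X} be a POVM on ℂ^D, let ψ, ψ⊥ ∈ ℂ^D be unit vectors with ⟨ψ, ψ⊥⟩ = 0, let r ∈ [0, 1], and let p' : X → ℝ with p'(x) ≥ 0 for all x. Then Σ over x ∈ X with r·⟨ψ, M_x ψ⟩ + (1−r)·p'(x) > 0 of r²·(Re⟨ψ⊥, M_x ψ⟩)² / (r·⟨ψ, M_x ψ⟩ + (1−r)·p'(x)) ≤ r. -/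
open Matrix
open scoped Classical ComplexOrder

/-- Cauchy–Schwarz for the sesquilinear form of a positive semidefinite matrix. -/
lemma cs_aux {ι : Type*} [Fintype ι] [DecidableEq ι] {A : Matrix ι ι ℂ}
    (hA : A.PosSemidef) (u v : ι → ℂ) :
    (star u ⬝ᵥ A *ᵥ v).re ^ 2 ≤ (star u ⬝ᵥ A *ᵥ u).re * (star v ⬝ᵥ A *ᵥ v).re := by
  obtain ⟨B, hB⟩ : ∃ B : Matrix ι ι ℂ, A = star B * B := by
    open scoped MatrixOrder in exact CStarAlgebra.nonneg_iff_eq_star_mul_self.mp hA.nonneg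
  rw [star_eq_conjTranspose] at hB
  subst hB
  have key : ∀ w z : ι → ℂ, star w ⬝ᵥ (Bᴴ * B) *ᵥ z = star (B *ᵥ w) ⬝ᵥ (B *ᵥ z) := by
    intro w z
    rw [← mulVec_mulVec, dotProduct_mulVec, star_mulVec]
  rw [key u v, key u u, key v v]
  set a : EuclideanSpace ℂ ι := (WithLp.equiv 2 _).symm (B *ᵥ u)
  set b : EuclideanSpace ℂ ι := (WithLp.equiv 2 _).symm (B *ᵥ v)
  have hab : star (B *ᵥ u) ⬝ᵥ (B *ᵥ v) = inner ℂ a b :=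
    by rw [dotProduct_comm]; rfl
  have haa : star (B *ᵥ u) ⬝ᵥ (B *ᵥ u) = inner ℂ a a :=
    by rw [dotProduct_comm]; rfl
  have hbb : star (B *ᵥ v) ⬝ᵥ (B *ᵥ v) = inner ℂ b b :=
    by rw [dotProduct_comm]; rfl
  rw [hab, haa, hbb]
  have h1 : (inner ℂ a b : ℂ).re ^ 2 ≤ ‖(inner ℂ a b : ℂ)‖ ^ 2 := by
    have := Complex.abs_re_le_norm (inner ℂ a b : ℂ)
    have : |(inner ℂ a b : ℂ).re| ≤ ‖(inner ℂ a b : ℂ)‖ := this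
    nlinarith [abs_nonneg (inner ℂ a b : ℂ).re, le_abs_self ((inner ℂ a b : ℂ).re),
      neg_abs_le ((inner ℂ a b : ℂ).re)]
  refine h1.trans ?_
  have h2 : ‖(inner ℂ a b : ℂ)‖ ≤ ‖a‖ * ‖b‖ := norm_inner_le_norm a b
  have haa' : (inner ℂ a a : ℂ).re = ‖a‖ ^ 2 := by
    exact @inner_self_eq_norm_sq ℂ _ _ _ _ _
  have hbb' : (inner ℂ b b : ℂ).re = ‖b‖ ^ 2 := by
    exact @inner_self_eq_norm_sq ℂ _ _ _ _ _
  rw [haa', hbb']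
  nlinarith [norm_nonneg (inner ℂ a b : ℂ), norm_nonneg a, norm_nonneg b]

/-- white-noise upper bound: the Fisher-information coefficient γ_r
of the white-noise-admixed state r·|ψ⟩⟨ψ| + (1−r)·(noise) measured with a POVM M
never exceeds the admixture weight r. -/
theorem whitenoise_gamma_le_r
    {D : ℕ} (hD : 1 ≤ D) {X : Type*} [Fintype X] [Nonempty X]
    (M : X → Matrix (Fin D) (Fin D) ℂ)
    (hpsd : ∀ x, (M x).PosSemidef) (hsum : ∑ x, M x = 1)
    (ψ ψperp : Fin D → ℂ)
    (hψ : star ψ ⬝ᵥ ψ = 1) (hψperp : star ψperp ⬝ᵥ ψperp = 1)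
    (horth : star ψ ⬝ᵥ ψperp = 0)
    (r : ℝ) (hr0 : 0 ≤ r) (hr1 : r ≤ 1)
    (pprime : X → ℝ) (hpprime : ∀ x, 0 ≤ pprime x) :
    ∑ x ∈ Finset.univ.filter
        (fun x => 0 < r * qre M ψ ψ x + (1 - r) * pprime x),
        r ^ 2 * (qre M ψperp ψ x) ^ 2
          / (r * qre M ψ ψ x + (1 - r) * pprime x)
      ≤ r := by
  set q : X → ℝ := qre M ψ ψ with hq
  set a : X → ℝ := qre M ψperp ψ with ha
  set b : X → ℝ := qre M ψperp ψperp with hb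
  have hbnn : ∀ x, 0 ≤ b x := fun x => by
    have := (Complex.le_def.mp ((hpsd x).dotProduct_mulVec_nonneg ψperp)).1
    simpa [hb, qre] using this
  have hqnn : ∀ x, 0 ≤ q x := fun x => by
    have := (Complex.le_def.mp ((hpsd x).dotProduct_mulVec_nonneg ψ)).1
    simpa [hq, qre] using this
  have hcs : ∀ x, a x ^ 2 ≤ b x * q x := fun x => cs_aux (hpsd x) ψperp ψ
  have hsumb : ∑ x, b x = 1 := by
    have hmv : ((∑ x, M x) *ᵥ ψperp) = ∑ x, M x *ᵥ ψperp := by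
      ext i
      simp only [Matrix.mulVec, dotProduct, Finset.sum_apply, Matrix.sum_apply,
        Finset.sum_mul]
      rw [Finset.sum_comm]
    have h1 : ∑ x, (star ψperp ⬝ᵥ (M x) *ᵥ ψperp) = 1 := by
      have h2 : star ψperp ⬝ᵥ (∑ x, M x *ᵥ ψperp) = ∑ x, star ψperp ⬝ᵥ (M x *ᵥ ψperp) := by
        simp only [dotProduct, Finset.sum_apply, Finset.mul_sum]
        rw [Finset.sum_comm]
      rw [← h2, ← hmv, hsum, Matrix.one_mulVec, hψperp]
    calc ∑ x, b x = (∑ x, (star ψperp ⬝ᵥ (M x) *ᵥ ψperp)).re := by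
          simp [hb, qre, Complex.re_sum]
      _ = 1 := by rw [h1]; simp
  calc ∑ x ∈ Finset.univ.filter (fun x => 0 < r * q x + (1 - r) * pprime x),
        r ^ 2 * a x ^ 2 / (r * q x + (1 - r) * pprime x)
      ≤ ∑ x ∈ Finset.univ.filter (fun x => 0 < r * q x + (1 - r) * pprime x),
        r * b x := by
        refine Finset.sum_le_sum fun x hx => ?_
        rw [Finset.mem_filter] at hx
        have hd := hx.2
        rw [div_le_iff₀ hd]
        have hp : 0 ≤ (1 - r) * pprime x :=
          mul_nonneg (by linarith) (hpprime x)
        nlinarith [hcs x, hbnn x, hqnn x, mul_le_mul_of_nonneg_left (hcs x) (sq_nonneg r),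
          mul_nonneg (mul_nonneg hr0 (hbnn x)) hp]
    _ ≤ ∑ x, r * b x := by
        refine Finset.sum_le_sum_of_subset_of_nonneg (Finset.filter_subset _ _)
          fun x _ _ => mul_nonneg hr0 (hbnn x)
    _ = r := by rw [← Finset.mul_sum, hsumb, mul_one]
end

section
/- Satisfiability of the no-go condition (key step of Corollary 2): let d ≥ 1, let X be a nonempty finite set, and let p : X × Fin d → ℝ satisfy p(x|i) ≥ 0 and be non-trivial, meaning that for every pair i, i' ∈ Fin d there exists x ∈ X with p(x|i)·p(x|i') > 0. For each x let S_x be the complex d×d diagonal matrix with diagonal entries (S_x)_{ii} = √(p(x|i)). Then for every Hermitian d×d complex matrix h and every unitary d×d complex matrix V, there exists a family (A_x)_{x∈X} of Hermitian d×d complex matrices such that h = Σ_{x∈X} V† · S_x · A_x · S_x · V. -/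
open Matrix
open scoped Classical

/-- satisfiability of the no-go condition, key step of Corollary 2:
for a non-trivial detection channel p(x|i) ≥ 0 (every pair of ideal outcomes shares
an observable outcome of positive joint probability), writing S_x for the diagonal
matrix with entries √(p(x|i)), every Hermitian h can be written as
h = Σ_x V† S_x A_x S_x V with Hermitian A_x, for any unitary V. -/
theorem nogo_condition_satisfiable
    {d : ℕ} (hd : 1 ≤ d) {X : Type*} [Fintype X] [Nonempty X]
    (p : X → Fin d → ℝ) (hp : ∀ x i, 0 ≤ p x i)
    (hnontrivial : ∀ i i' : Fin d, ∃ x : X, 0 < p x i * p x i')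
    (S : X → Matrix (Fin d) (Fin d) ℂ)
    (hS : ∀ x, S x = Matrix.diagonal (fun i => (Real.sqrt (p x i) : ℂ)))
    (h : Matrix (Fin d) (Fin d) ℂ) (hh : h.IsHermitian)
    (V : Matrix (Fin d) (Fin d) ℂ) (hV : V ∈ Matrix.unitaryGroup (Fin d) ℂ) :
    ∃ A : X → Matrix (Fin d) (Fin d) ℂ,
      (∀ x, (A x).IsHermitian) ∧
      h = ∑ x, Vᴴ * S x * A x * S x * V := by
  -- conjugated target
  set g : Matrix (Fin d) (Fin d) ℂ := V * h * Vᴴ with hg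
  have hgH : g.IsHermitian := by
    unfold Matrix.IsHermitian
    rw [hg, Matrix.conjTranspose_mul, Matrix.conjTranspose_mul,
      Matrix.conjTranspose_conjTranspose, hh.eq, Matrix.mul_assoc]
  -- symmetric choice of outcome
  let f : Fin d → Fin d → X := fun i i' =>
    if i ≤ i' then (hnontrivial i i').choose else (hnontrivial i' i).choose
  have hfsymm : ∀ i i', f i i' = f i' i := by
    intro i i'
    by_cases h1 : i ≤ i' <;> by_cases h2 : i' ≤ i <;> simp [f, h1, h2]
    · have : i = i' := le_antisymm h1 h2
      subst this; rfl
    · exact absurd (le_of_not_ge h1) h2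
  have hfpos : ∀ i i', 0 < p (f i i') i ∧ 0 < p (f i i') i' := by
    intro i i'
    have key : 0 < p (f i i') i * p (f i i') i' := by
      by_cases h1 : i ≤ i'
      · simpa [f, h1] using (hnontrivial i i').choose_spec
      · have := (hnontrivial i' i).choose_spec
        simp only [f, h1, if_false]
        linarith [this, mul_comm (p (hnontrivial i' i).choose i') (p (hnontrivial i' i).choose i)]
    constructor
    · rcases lt_or_eq_of_le (hp (f i i') i) with h' | h'
      · exact h'
      · exfalso; rw [← h'] at key; simpa using key
    · rcases lt_or_eq_of_le (hp (f i i') i') with h' | h'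
      · exact h'
      · exfalso; rw [← h'] at key; simpa using key
  -- define A
  refine ⟨fun x => Matrix.of (fun i i' =>
    if f i i' = x then g i i' / ((Real.sqrt (p x i) : ℂ) * (Real.sqrt (p x i') : ℂ)) else 0),
    ?_, ?_⟩
  · intro x
    ext i i'
    simp only [Matrix.conjTranspose_apply, Matrix.of_apply, hfsymm i' i]
    by_cases hx : f i i' = x
    · simp only [hx, if_true, map_div₀, _root_.map_mul, Complex.conj_ofReal]
      rw [← hgH.apply i' i]
      simp [Matrix.conjTranspose_apply, mul_comm]
    · simp [hx]
  · -- the sum identity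
    have hinner : (∑ x, S x * Matrix.of (fun i i' =>
        if f i i' = x then g i i' / ((Real.sqrt (p x i) : ℂ) * (Real.sqrt (p x i') : ℂ)) else 0)
        * S x) = g := by
      ext i i'
      rw [Matrix.sum_apply]
      have hterm : ∀ x, (S x * Matrix.of (fun i i' =>
          if f i i' = x then g i i' / ((Real.sqrt (p x i) : ℂ) * (Real.sqrt (p x i') : ℂ)) else 0)
          * S x) i i'
          = if f i i' = x then g i i' else 0 := by
        intro x
        rw [hS x, Matrix.mul_diagonal, Matrix.diagonal_mul, Matrix.of_apply]
        by_cases hx : f i i' = x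
        · simp only [hx, if_true]
          have h1 : (Real.sqrt (p x i) : ℂ) ≠ 0 := by
            simp only [ne_eq, Complex.ofReal_eq_zero]
            exact Real.sqrt_ne_zero'.mpr (hx ▸ (hfpos i i').1)
          have h2 : (Real.sqrt (p x i') : ℂ) ≠ 0 := by
            simp only [ne_eq, Complex.ofReal_eq_zero]
            exact Real.sqrt_ne_zero'.mpr (hx ▸ (hfpos i i').2)
          field_simp
        · simp [hx]
      rw [Finset.sum_congr rfl (fun x _ => hterm x)]
      simp
    have hVV : Vᴴ * V = 1 := hV.1
    have hVV' : V * Vᴴ = 1 := mul_eq_one_comm.mp hVV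
    calc h = Vᴴ * (V * h * Vᴴ) * V := by
            rw [Matrix.mul_assoc, Matrix.mul_assoc, Matrix.mul_assoc, hVV,
              Matrix.mul_one, ← Matrix.mul_assoc, hVV, Matrix.one_mul]
      _ = Vᴴ * g * V := by rw [hg]
      _ = ∑ x, Vᴴ * S x * (Matrix.of (fun i i' =>
            if f i i' = x then g i i' / ((Real.sqrt (p x i) : ℂ) * (Real.sqrt (p x i') : ℂ)) else 0))
            * S x * V := by
            have hsum : (∑ x, Vᴴ * S x * (Matrix.of (fun i i' =>
              if f i i' = x then g i i' / ((Real.sqrt (p x i) : ℂ) * (Real.sqrt (p x i') : ℂ)) else 0))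
              * S x * V) = Vᴴ * (∑ x, S x * (Matrix.of (fun i i' =>
              if f i i' = x then g i i' / ((Real.sqrt (p x i) : ℂ) * (Real.sqrt (p x i') : ℂ)) else 0))
              * S x) * V := by
                rw [Finset.mul_sum, Finset.sum_mul]
                exact Finset.sum_congr rfl (fun x _ => by simp only [Matrix.mul_assoc])
            rw [hsum, hinner]
end

section
/- GHZ sensitivity bound under bit-flip detection noise: let p, q ∈ ℝ with 0 ≤ p ≤ 1 and 0 ≤ q ≤ 1. Consider the qubit POVM with two outcomes given by the diagonal matrices M₀ = diag(p, 1−q) and M₁ = diag(1−p, q). For every N ≥ 1, let e₀, e₁ ∈ ℂ² be the standard basis vectors and define the cat states Ψ := (e₀^{⊗N} + e₁^{⊗N})/√2 and Ψ⊥ := (e₀^{⊗N} − e₁^{⊗N})/√2 in ℂ^{(Fin N → Fin 2)}. Then Γ_{M^{⊗N}}(Ψ, Ψ⊥) ≥ 1 − (√(p(1−q)) + √(q(1−p)))^N. -/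
open Matrix
open scoped Classical ComplexOrder

lemma sqrt_prod_aux {ι : Type*} (s : Finset ι) (f : ι → ℝ) (h : ∀ i ∈ s, 0 ≤ f i) :
    Real.sqrt (∏ i ∈ s, f i) = ∏ i ∈ s, Real.sqrt (f i) := by
  induction s using Finset.cons_induction with
  | empty => simp
  | cons i s hi ih =>
    rw [Finset.prod_cons, Finset.prod_cons,
      Real.sqrt_mul (h i (Finset.mem_cons_self i s)),
      ih (fun j hj => h j (Finset.mem_cons_of_mem hj))]

lemma pointwise_ineq (A B : ℝ) (hA : 0 ≤ A) (hB : 0 ≤ B) (h : 0 < (A+B)/2) :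
    (A+B)/2 - Real.sqrt (A*B) ≤ ((A-B)/2)^2 / ((A+B)/2) := by
  have hs0 := Real.sqrt_nonneg (A*B)
  have hs : Real.sqrt (A*B) ^2 = A*B := Real.sq_sqrt (mul_nonneg hA hB)
  have hle : Real.sqrt (A*B) ≤ (A+B)/2 := by
    rw [show (A+B)/2 = Real.sqrt (((A+B)/2)^2) from (Real.sqrt_sq (by linarith)).symm]
    exact Real.sqrt_le_sqrt (by nlinarith [sq_nonneg (A-B)])
  rw [le_div_iff₀ h]
  nlinarith [mul_nonneg hs0 (by linarith : (0:ℝ) ≤ (A+B)/2 - Real.sqrt (A*B))]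


/-- GHZ sensitivity bound under bit-flip detection noise: for the
qubit POVM M₀ = diag(p, 1−q), M₁ = diag(1−p, q) and the N-qubit GHZ cat states,
the distinguishability functional of M^{⊗N} is at least
1 − (√(p(1−q)) + √(q(1−p)))^N. -/
theorem ghz_bitflip_bound (p q : ℝ)
    (hp0 : 0 ≤ p) (hp1 : p ≤ 1) (hq0 : 0 ≤ q) (hq1 : q ≤ 1)
    (M : Fin 2 → Matrix (Fin 2) (Fin 2) ℂ)
    (hM : M = ![Matrix.diagonal ![(p : ℂ), ((1 - q : ℝ) : ℂ)],
                Matrix.diagonal ![((1 - p : ℝ) : ℂ), (q : ℂ)]])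
    (N : ℕ) (hN : 1 ≤ N)
    (e₀ e₁ : Fin 2 → ℂ) (he₀ : e₀ = ![1, 0]) (he₁ : e₁ = ![0, 1])
    (Ψ Ψperp : (Fin N → Fin 2) → ℂ)
    (hΨ : Ψ = fun v => (prodVec e₀ N v + prodVec e₁ N v) / (Real.sqrt 2 : ℂ))
    (hΨperp : Ψperp = fun v =>
      (prodVec e₀ N v - prodVec e₁ N v) / (Real.sqrt 2 : ℂ)) :
    1 - (Real.sqrt (p * (1 - q)) + Real.sqrt (q * (1 - p))) ^ N
      ≤ Gamma (prodPOVM M N) Ψ Ψperp := by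
  -- abbreviations
  set c0 : Fin N → Fin 2 := fun _ => 0 with hc0
  set c1 : Fin N → Fin 2 := fun _ => 1 with hc1
  set a : Fin 2 → ℝ := ![p, 1 - p] with ha
  set b : Fin 2 → ℝ := ![1 - q, q] with hb
  set A : (Fin N → Fin 2) → ℝ := fun xs => ∏ j, a (xs j) with hA
  set B : (Fin N → Fin 2) → ℝ := fun xs => ∏ j, b (xs j) with hB
  have j₀ : Fin N := ⟨0, hN⟩
  -- indicator facts
  have h0 : ∀ v, prodVec e₀ N v = if v = c0 then 1 else 0 := by
    intro v
    by_cases h : v = c0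
    · subst h; simp [prodVec, he₀, hc0]
    · rw [if_neg h]
      obtain ⟨j, hj⟩ := Function.ne_iff.mp h
      refine Finset.prod_eq_zero (Finset.mem_univ j) ?_
      have hj' : v j ≠ 0 := by simpa [hc0] using hj
      have : v j = 1 := by omega
      rw [this, he₀]; simp
  have h1 : ∀ v, prodVec e₁ N v = if v = c1 then 1 else 0 := by
    intro v
    by_cases h : v = c1
    · subst h; simp [prodVec, he₁, hc1]
    · rw [if_neg h]
      obtain ⟨j, hj⟩ := Function.ne_iff.mp h
      refine Finset.prod_eq_zero (Finset.mem_univ j) ?_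
      have hj' : v j ≠ 1 := by simpa [hc1] using hj
      have : v j = 0 := by omega
      rw [this, he₁]; simp
  -- matrix entry facts
  have hMa : ∀ x : Fin 2, M x 0 0 = ((a x : ℝ) : ℂ) := by
    intro x; fin_cases x <;> simp [hM, ha]
  have hMb : ∀ x : Fin 2, M x 1 1 = ((b x : ℝ) : ℂ) := by
    intro x; fin_cases x <;> simp [hM, hb]
  have hM01 : ∀ x : Fin 2, M x 0 1 = 0 := by
    intro x; fin_cases x <;> simp [hM, Matrix.diagonal_apply_ne]
  have hM10 : ∀ x : Fin 2, M x 1 0 = 0 := by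
    intro x; fin_cases x <;> simp [hM, Matrix.diagonal_apply_ne]
  have hP00 : ∀ xs, prodPOVM M N xs c0 c0 = ((A xs : ℝ) : ℂ) := by
    intro xs
    simp only [prodPOVM, Matrix.of_apply, hA, Complex.ofReal_prod]
    exact Finset.prod_congr rfl fun j _ => hMa (xs j)
  have hP11 : ∀ xs, prodPOVM M N xs c1 c1 = ((B xs : ℝ) : ℂ) := by
    intro xs
    simp only [prodPOVM, Matrix.of_apply, hB, Complex.ofReal_prod]
    exact Finset.prod_congr rfl fun j _ => hMb (xs j)
  have hP01 : ∀ xs, prodPOVM M N xs c0 c1 = 0 := by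
    intro xs
    exact Finset.prod_eq_zero (Finset.mem_univ j₀) (hM01 (xs j₀))
  have hP10 : ∀ xs, prodPOVM M N xs c1 c0 = 0 := by
    intro xs
    exact Finset.prod_eq_zero (Finset.mem_univ j₀) (hM10 (xs j₀))
  -- cat states as indicators
  have hs2 : ((Real.sqrt 2 : ℝ) : ℂ) * ((Real.sqrt 2 : ℝ) : ℂ) = 2 := by
    rw [← Complex.ofReal_mul, Real.mul_self_sqrt (by norm_num)]
    norm_num
  have hΨ' : ∀ v, Ψ v = ((if v = c0 then 1 else 0) + (if v = c1 then 1 else 0)) / ((Real.sqrt 2 : ℝ) : ℂ) := by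
    intro v; rw [hΨ]; simp only [h0, h1]
  have hΨp' : ∀ v, Ψperp v = ((if v = c0 then 1 else 0) - (if v = c1 then 1 else 0)) / ((Real.sqrt 2 : ℝ) : ℂ) := by
    intro v; rw [hΨperp]; simp only [h0, h1]
  -- mulVec computation
  have hmv : ∀ xs v, (prodPOVM M N xs *ᵥ Ψ) v
      = (prodPOVM M N xs v c0 + prodPOVM M N xs v c1) / ((Real.sqrt 2 : ℝ) : ℂ) := by
    intro xs v
    show ∑ w, prodPOVM M N xs v w * Ψ w = _
    have : ∀ w, prodPOVM M N xs v w * Ψ w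
        = ((if w = c0 then prodPOVM M N xs v w else 0)
          + (if w = c1 then prodPOVM M N xs v w else 0)) / ((Real.sqrt 2 : ℝ) : ℂ) := by
      intro w; rw [hΨ' w]; split_ifs <;> ring
    rw [Finset.sum_congr rfl fun w _ => this w, ← Finset.sum_div,
      Finset.sum_add_distrib, Finset.sum_ite_eq', Finset.sum_ite_eq']
    simp
  -- dot product values
  have key1 : ∀ xs, (star Ψ ⬝ᵥ (prodPOVM M N xs *ᵥ Ψ)) = (((A xs + B xs)/2 : ℝ) : ℂ) := by
    intro xs
    show ∑ v, star (Ψ v) * (prodPOVM M N xs *ᵥ Ψ) v = _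
    have : ∀ v, star (Ψ v) * (prodPOVM M N xs *ᵥ Ψ) v
        = ((if v = c0 then (prodPOVM M N xs v c0 + prodPOVM M N xs v c1) else 0)
          + (if v = c1 then (prodPOVM M N xs v c0 + prodPOVM M N xs v c1) else 0))
            / (((Real.sqrt 2 : ℝ) : ℂ) * ((Real.sqrt 2 : ℝ) : ℂ)) := by
      intro v
      rw [hmv, hΨ' v]
      simp only [star_div₀, star_add, apply_ite (star : ℂ → ℂ), star_one, star_zero,
        Complex.star_def, Complex.conj_ofReal]
      split_ifs <;> ring
    rw [Finset.sum_congr rfl fun v _ => this v, ← Finset.sum_div,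
      Finset.sum_add_distrib, Finset.sum_ite_eq', Finset.sum_ite_eq', hs2]
    simp only [Finset.mem_univ, if_true, hP00, hP01, hP10, hP11]
    push_cast; ring
  have key2 : ∀ xs, (star Ψperp ⬝ᵥ (prodPOVM M N xs *ᵥ Ψ)) = (((A xs - B xs)/2 : ℝ) : ℂ) := by
    intro xs
    show ∑ v, star (Ψperp v) * (prodPOVM M N xs *ᵥ Ψ) v = _
    have : ∀ v, star (Ψperp v) * (prodPOVM M N xs *ᵥ Ψ) v
        = ((if v = c0 then (prodPOVM M N xs v c0 + prodPOVM M N xs v c1) else 0)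
          - (if v = c1 then (prodPOVM M N xs v c0 + prodPOVM M N xs v c1) else 0))
            / (((Real.sqrt 2 : ℝ) : ℂ) * ((Real.sqrt 2 : ℝ) : ℂ)) := by
      intro v
      rw [hmv, hΨp' v]
      simp only [star_div₀, star_sub, apply_ite (star : ℂ → ℂ), star_one, star_zero,
        Complex.star_def, Complex.conj_ofReal]
      split_ifs <;> ring
    rw [Finset.sum_congr rfl fun v _ => this v, ← Finset.sum_div,
      Finset.sum_sub_distrib, Finset.sum_ite_eq', Finset.sum_ite_eq', hs2]
    simp only [Finset.mem_univ, if_true, hP00, hP01, hP10, hP11]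
    push_cast; ring
  have hqΨ : ∀ xs, qre (prodPOVM M N) Ψ Ψ xs = (A xs + B xs)/2 := by
    intro xs; rw [qre, key1]; exact Complex.ofReal_re _
  have hqP : ∀ xs, qre (prodPOVM M N) Ψperp Ψ xs = (A xs - B xs)/2 := by
    intro xs; rw [qre, key2]; exact Complex.ofReal_re _
  -- nonnegativity
  have ha0 : ∀ x : Fin 2, 0 ≤ a x := by
    intro x; fin_cases x <;> simp [ha] <;> linarith
  have hb0 : ∀ x : Fin 2, 0 ≤ b x := by
    intro x; fin_cases x <;> simp [hb] <;> linarith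
  have hA0 : ∀ xs, 0 ≤ A xs := fun xs => Finset.prod_nonneg fun j _ => ha0 (xs j)
  have hB0 : ∀ xs, 0 ≤ B xs := fun xs => Finset.prod_nonneg fun j _ => hb0 (xs j)
  -- sum computations
  have hsumA : ∑ xs : Fin N → Fin 2, A xs = 1 := by
    rw [hA, ← Fintype.piFinset_univ,
      ← Finset.prod_univ_sum (fun _ : Fin N => (Finset.univ : Finset (Fin 2))) (fun _ x => a x)]
    simp [ha, Fin.sum_univ_two]
  have hsumB : ∑ xs : Fin N → Fin 2, B xs = 1 := by
    rw [hB, ← Fintype.piFinset_univ,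
      ← Finset.prod_univ_sum (fun _ : Fin N => (Finset.univ : Finset (Fin 2))) (fun _ x => b x)]
    simp [hb, Fin.sum_univ_two]
  have hsumS : ∑ xs : Fin N → Fin 2, Real.sqrt (A xs * B xs)
      = (Real.sqrt (p * (1 - q)) + Real.sqrt (q * (1 - p))) ^ N := by
    have e1 : ∀ xs : Fin N → Fin 2, Real.sqrt (A xs * B xs)
        = ∏ j, Real.sqrt (a (xs j) * b (xs j)) := by
      intro xs
      rw [hA, hB, ← Finset.prod_mul_distrib]
      exact sqrt_prod_aux _ _ fun j _ => mul_nonneg (ha0 (xs j)) (hb0 (xs j))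
    rw [Finset.sum_congr rfl fun xs _ => e1 xs, ← Fintype.piFinset_univ,
      ← Finset.prod_univ_sum (fun _ : Fin N => (Finset.univ : Finset (Fin 2)))
        (fun _ x => Real.sqrt (a x * b x))]
    rw [Finset.prod_const]
    congr 1
    · rw [Fin.sum_univ_two]
      simp only [ha, hb, Matrix.cons_val_zero, Matrix.cons_val_one, Matrix.head_cons]
      rw [mul_comm (1-p) q]
    · simp
  -- main chain
  have hmain : ∑ xs : Fin N → Fin 2, ((A xs + B xs)/2 - Real.sqrt (A xs * B xs))
      = 1 - (Real.sqrt (p * (1 - q)) + Real.sqrt (q * (1 - p))) ^ N := by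
    rw [Finset.sum_sub_distrib, ← Finset.sum_div, Finset.sum_add_distrib, hsumA, hsumB, hsumS]
    norm_num
  rw [← hmain, Gamma]
  rw [← Finset.sum_subset (Finset.filter_subset
      (fun xs => 0 < qre (prodPOVM M N) Ψ Ψ xs) Finset.univ)
      (fun xs _ hxs => ?_)]
  · refine Finset.sum_le_sum fun xs hxs => ?_
    rw [Finset.mem_filter] at hxs
    have hpos : 0 < (A xs + B xs)/2 := by rw [← hqΨ]; exact hxs.2
    rw [hqΨ, hqP]
    exact pointwise_ineq _ _ (hA0 xs) (hB0 xs) hpos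
  · rw [Finset.mem_filter, not_and] at hxs
    have hnp := not_lt.mp (hxs (Finset.mem_univ xs))
    rw [hqΨ] at hnp
    have hA' : A xs = 0 := by have h1 := hA0 xs; have h2 := hB0 xs; linarith
    have hB' : B xs = 0 := by have h1 := hA0 xs; have h2 := hB0 xs; linarith
    rw [hA', hB']
    simp
end

section
/- Lossy interferometry coefficient: let N ≥ 1, η ∈ (0, 1), and φ ∈ ℝ with sin φ ≠ 0 and cos φ ≠ 0. For x ∈ {0, 1, …, N} let B(x) := C(N, x)·η^x·(1−η)^{N−x} be the binomial distribution. On the outcome set of pairs (x₁, x₂) ∈ {0,…,N}², define p₁(x₁, x₂) := B(x₁) if x₂ = 0 and 0 otherwise, and p₂(x₁, x₂) := B(x₂) if x₁ = 0 and 0 otherwise. Set a₁ := sin φ, a₂ := cos φ, b₁ := cos φ, b₂ := −sin φ, and D(x₁, x₂) := p₁(x₁,x₂)·a₁² + p₂(x₁,x₂)·a₂². Then Σ over pairs (x₁, x₂) with D(x₁, x₂) > 0 of (p₁(x₁,x₂)·a₁·b₁ + p₂(x₁,x₂)·a₂·b₂)² / D(x₁, x₂) = 1 − (1−η)^N. 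-/
open scoped Classical

/-- lossy interferometry coefficient: with binomial photon-loss
distributions B(x) = C(N,x) η^x (1−η)^{N−x} feeding the two detectors for the
states |N,0⟩ and |0,N⟩, the classical distinguishability functional evaluated at
the superpositions with angle φ equals 1 − (1−η)^N, independently of φ. -/
theorem lossy_interferometry_coefficient
    (N : ℕ) (hN : 1 ≤ N) (η : ℝ) (hη0 : 0 < η) (hη1 : η < 1)
    (φ : ℝ) (hs : Real.sin φ ≠ 0) (hc : Real.cos φ ≠ 0)
    (B : Fin (N + 1) → ℝ)
    (hB : ∀ x, B x = (N.choose (x : ℕ)) * η ^ (x : ℕ) * (1 - η) ^ (N - (x : ℕ)))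
    (p₁ p₂ : Fin (N + 1) × Fin (N + 1) → ℝ)
    (hp₁ : ∀ x, p₁ x = if x.2 = 0 then B x.1 else 0)
    (hp₂ : ∀ x, p₂ x = if x.1 = 0 then B x.2 else 0)
    (D : Fin (N + 1) × Fin (N + 1) → ℝ)
    (hD : ∀ x, D x = p₁ x * Real.sin φ ^ 2 + p₂ x * Real.cos φ ^ 2) :
    ∑ x ∈ Finset.univ.filter (fun x => 0 < D x),
        (p₁ x * Real.sin φ * Real.cos φ
          + p₂ x * Real.cos φ * (-Real.sin φ)) ^ 2 / D x
      = 1 - (1 - η) ^ N := by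
  set s := Real.sin φ
  set c := Real.cos φ
  have hs2 : (0:ℝ) < s ^ 2 := by positivity
  have hc2 : (0:ℝ) < c ^ 2 := by positivity
  have hη1' : (0:ℝ) < 1 - η := by linarith
  have hBpos : ∀ x : Fin (N + 1), 0 < B x := by
    intro x
    rw [hB]
    have h1 : (0:ℝ) < (N.choose (x : ℕ) : ℝ) := by
      exact_mod_cast Nat.choose_pos (by omega : (x:ℕ) ≤ N)
    positivity
  -- total sum of B is 1
  have hsum : ∑ x : Fin (N + 1), B x = 1 := by
    simp only [hB]
    rw [Fin.sum_univ_eq_sum_range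
      (fun i => ((N.choose i : ℝ) * η ^ i * (1 - η) ^ (N - i)))]
    calc ∑ i ∈ Finset.range (N + 1), ((N.choose i : ℝ) * η ^ i * (1 - η) ^ (N - i))
        = ∑ i ∈ Finset.range (N + 1), η ^ i * (1 - η) ^ (N - i) * (N.choose i : ℝ) := by
          apply Finset.sum_congr rfl; intro i _; ring
      _ = (η + (1 - η)) ^ N := (add_pow η (1 - η) N).symm
      _ = 1 := by norm_num
  -- rewrite the filtered sum as a sum of indicators
  rw [Finset.sum_filter]
  have key : ∀ x : Fin (N + 1) × Fin (N + 1),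
      (if 0 < D x then (p₁ x * s * c + p₂ x * c * (-s)) ^ 2 / D x else 0)
        = (if x.2 = 0 ∧ x.1 ≠ 0 then B x.1 * c ^ 2 else 0)
          + (if x.1 = 0 ∧ x.2 ≠ 0 then B x.2 * s ^ 2 else 0) := by
    rintro ⟨a, b⟩
    by_cases hb : b = 0
    · by_cases ha : a = 0
      · subst ha; subst hb
        have e1 : p₁ ((0 : Fin (N+1)), (0 : Fin (N+1))) = B 0 := by rw [hp₁]; simp
        have e2 : p₂ ((0 : Fin (N+1)), (0 : Fin (N+1))) = B 0 := by rw [hp₂]; simp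
        have hB0 := hBpos 0
        have hD0 : 0 < D ((0 : Fin (N+1)), (0 : Fin (N+1))) := by
          rw [hD, e1, e2]; positivity
        rw [if_pos hD0, e1, e2,
          if_neg (by rintro ⟨_, h⟩; exact h rfl),
          if_neg (by rintro ⟨_, h⟩; exact h rfl)]
        have hz : B (0 : Fin (N+1)) * s * c + B 0 * c * (-s) = 0 := by ring
        rw [hz]
        simp
      · subst hb
        have e1 : p₁ (a, (0 : Fin (N+1))) = B a := by rw [hp₁]; simp
        have e2 : p₂ (a, (0 : Fin (N+1))) = 0 := by rw [hp₂]; simp [ha]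
        have eD : D (a, (0 : Fin (N+1))) = B a * s ^ 2 := by rw [hD, e1, e2]; ring
        have hBa := hBpos a
        have hD0 : 0 < D (a, (0 : Fin (N+1))) := by rw [eD]; positivity
        rw [if_pos hD0, e1, e2, eD, if_pos ⟨rfl, ha⟩,
          if_neg (by rintro ⟨h, _⟩; exact ha h)]
        field_simp
        ring
    · by_cases ha : a = 0
      · subst ha
        have e1 : p₁ ((0 : Fin (N+1)), b) = 0 := by rw [hp₁]; simp [hb]
        have e2 : p₂ ((0 : Fin (N+1)), b) = B b := by rw [hp₂]; simp
        have eD : D ((0 : Fin (N+1)), b) = B b * c ^ 2 := by rw [hD, e1, e2]; ring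
        have hBb := hBpos b
        have hD0 : 0 < D ((0 : Fin (N+1)), b) := by rw [eD]; positivity
        rw [if_pos hD0, e1, e2, eD,
          if_neg (by rintro ⟨h, _⟩; exact hb h), if_pos ⟨rfl, hb⟩]
        field_simp
        ring
      · have e1 : p₁ (a, b) = 0 := by rw [hp₁]; simp [hb]
        have e2 : p₂ (a, b) = 0 := by rw [hp₂]; simp [ha]
        have eD : D (a, b) = 0 := by rw [hD, e1, e2]; ring
        rw [if_neg (by rw [eD]; exact lt_irrefl 0),
          if_neg (by rintro ⟨h, _⟩; exact hb h),
          if_neg (by rintro ⟨h, _⟩; exact ha h)]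
        norm_num
  rw [Finset.sum_congr rfl (fun x _ => key x), Finset.sum_add_distrib]
  have hB1 : ∑ x : Fin (N+1), (if x ≠ 0 then B x else 0) = 1 - B 0 := by
    have h : ∑ x : Fin (N+1), (if x ≠ 0 then B x else 0)
        = (∑ x : Fin (N+1), B x) - ∑ x : Fin (N+1), (if x = 0 then B x else 0) := by
      rw [← Finset.sum_sub_distrib]
      apply Finset.sum_congr rfl
      intro x _
      by_cases hx : x = 0 <;> simp [hx]
    rw [h, hsum, Finset.sum_ite_eq' Finset.univ (0 : Fin (N+1)) B]
    simp
  have h1 : ∑ x : Fin (N + 1) × Fin (N + 1),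
      (if x.2 = 0 ∧ x.1 ≠ 0 then B x.1 * c ^ 2 else 0) = (1 - B 0) * c ^ 2 := by
    rw [Fintype.sum_prod_type]
    calc ∑ a : Fin (N+1), ∑ b : Fin (N+1), (if b = 0 ∧ a ≠ 0 then B a * c ^ 2 else 0)
        = ∑ a : Fin (N+1), (if a ≠ 0 then B a * c ^ 2 else 0) := by
          apply Finset.sum_congr rfl
          intro a _
          by_cases ha : a = 0 <;> simp [ha]
      _ = (∑ a : Fin (N+1), (if a ≠ 0 then B a else 0)) * c ^ 2 := by
          rw [Finset.sum_mul]
          apply Finset.sum_congr rfl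
          intro a _
          by_cases ha : a = 0 <;> simp [ha]
      _ = (1 - B 0) * c ^ 2 := by rw [hB1]
  have h2 : ∑ x : Fin (N + 1) × Fin (N + 1),
      (if x.1 = 0 ∧ x.2 ≠ 0 then B x.2 * s ^ 2 else 0) = (1 - B 0) * s ^ 2 := by
    rw [Fintype.sum_prod_type]
    calc ∑ a : Fin (N+1), ∑ b : Fin (N+1), (if a = 0 ∧ b ≠ 0 then B b * s ^ 2 else 0)
        = ∑ b : Fin (N+1), (if b ≠ 0 then B b * s ^ 2 else 0) := by
          rw [Finset.sum_eq_single (0 : Fin (N+1))]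
          · apply Finset.sum_congr rfl; intro b _; simp
          · intro a _ ha
            apply Finset.sum_eq_zero
            intro b _
            simp [ha]
          · simp
      _ = (∑ b : Fin (N+1), (if b ≠ 0 then B b else 0)) * s ^ 2 := by
          rw [Finset.sum_mul]
          apply Finset.sum_congr rfl
          intro b _
          by_cases hb : b = 0 <;> simp [hb]
      _ = (1 - B 0) * s ^ 2 := by rw [hB1]
  rw [h1, h2]
  have hB0 : B 0 = (1 - η) ^ N := by rw [hB]; simp
  have hpyth : s ^ 2 + c ^ 2 = 1 := Real.sin_sq_add_cos_sq φ
  rw [hB0]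
  have : (1 - (1 - η) ^ N) * c ^ 2 + (1 - (1 - η) ^ N) * s ^ 2
      = (1 - (1 - η) ^ N) * (s ^ 2 + c ^ 2) := by ring
  rw [this, hpyth, mul_one]
end

section
/- Theorem 1 (asymptotic recovery of the perfect quantum Fisher information): let d ≥ 2 and let M = (M_x)_{x∈X} be a POVM on ℂ^d that is not information-erasing, i.e. some M_y is not a complex scalar multiple of the identity. For each N ≥ 1 define γ_N := sSup { Γ_{M^{⊗N}}(Ξ, Ξ⊥) : Ξ, Ξ⊥ unit vectors in ℂ^{(Fin N → Fin d)} with ⟨Ξ, Ξ⊥⟩ = 0 }. Then γ_N ≤ 1 for every N, and γ_N → 1 as N → ∞. -/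
open Matrix
open scoped Classical ComplexOrder

/-- Exchange a sum over functions of a product with a product of sums. -/
lemma sum_fun_prod {ι κ : Type*} [Fintype ι] [Fintype κ] [DecidableEq ι] {R : Type*} [CommSemiring R]
    (f : ι → κ → R) : ∑ a : ι → κ, ∏ i, f i (a i) = ∏ i, ∑ k, f i k :=
  (Fintype.prod_sum f).symm

lemma sum_sum_prod {ι κ : Type*} [Fintype ι] [Fintype κ] [DecidableEq ι] {R : Type*} [CommSemiring R]
    (f : ι → κ → κ → R) :
    ∑ a : ι → κ, ∑ b : ι → κ, ∏ i, f i (a i) (b i) = ∏ i, ∑ s : κ × κ, f i s.1 s.2 := by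
  rw [← sum_fun_prod (fun i (s : κ × κ) => f i s.1 s.2)]
  rw [← Equiv.sum_comp (Equiv.arrowProdEquivProdArrow ι (fun _ => κ) (fun _ => κ)).symm
    (fun x : ι → κ × κ => ∏ i, f i (x i).1 (x i).2)]
  rw [Fintype.sum_prod_type]
  rfl

lemma prodVec_dot {d N : ℕ} (u v : Fin d → ℂ) :
    star (prodVec u N) ⬝ᵥ prodVec v N = (star u ⬝ᵥ v) ^ N := by
  have : ∀ a : Fin N → Fin d, star (prodVec u N) a * prodVec v N a
      = ∏ j, (starRingEnd ℂ) (u (a j)) * v (a j) := by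
    intro a
    simp only [Pi.star_apply, prodVec, RCLike.star_def, map_prod, ← Finset.prod_mul_distrib]
  simp only [dotProduct, this]
  rw [sum_fun_prod (fun (j : Fin N) (c : Fin d) => (starRingEnd ℂ) (u c) * v c)]
  simp [dotProduct, Finset.prod_const, Finset.card_univ]

lemma prodPOVM_dot {d N : ℕ} {X : Type*} [Fintype X] (M : X → Matrix (Fin d) (Fin d) ℂ)
    (u v : Fin d → ℂ) (xs : Fin N → X) :
    star (prodVec u N) ⬝ᵥ (prodPOVM M N xs *ᵥ prodVec v N)
      = ∏ j, star u ⬝ᵥ (M (xs j) *ᵥ v) := by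
  have h1 : ∀ a : Fin N → Fin d, star (prodVec u N) a * (prodPOVM M N xs *ᵥ prodVec v N) a
      = ∑ b : Fin N → Fin d, ∏ j, ((starRingEnd ℂ) (u (a j)) * M (xs j) (a j) (b j) * v (b j)) := by
    intro a
    simp only [mulVec, dotProduct, Finset.mul_sum, Pi.star_apply, prodVec, prodPOVM,
      Matrix.of_apply, RCLike.star_def, map_prod]
    refine Finset.sum_congr rfl fun b _ => ?_
    rw [← Finset.prod_mul_distrib, ← Finset.prod_mul_distrib]
    exact Finset.prod_congr rfl fun j _ => by ring
  simp only [dotProduct, h1]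
  rw [sum_sum_prod (fun (j : Fin N) (c e : Fin d) => (starRingEnd ℂ) (u c) * M (xs j) c e * v e)]
  refine Finset.prod_congr rfl fun j _ => ?_
  simp only [mulVec, dotProduct, Pi.star_apply, RCLike.star_def, Finset.mul_sum,
    Fintype.sum_prod_type]
  refine Finset.sum_congr rfl fun c _ => Finset.sum_congr rfl fun e _ => by ring

lemma sum_prodPOVM {d N : ℕ} {X : Type*} [Fintype X] (M : X → Matrix (Fin d) (Fin d) ℂ)
    (hsum : ∑ x, M x = 1) :
    ∑ xs : Fin N → X, prodPOVM M N xs = 1 := by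
  ext v w
  rw [Matrix.sum_apply]
  have : ∀ xs : Fin N → X, prodPOVM M N xs v w = ∏ j, M (xs j) (v j) (w j) := fun _ => rfl
  simp only [this]
  rw [sum_fun_prod (fun (j : Fin N) (x : X) => M x (v j) (w j))]
  have h1 : ∀ j : Fin N, ∑ x, M x (v j) (w j) = (1 : Matrix (Fin d) (Fin d) ℂ) (v j) (w j) := by
    intro j
    rw [← Matrix.sum_apply, hsum]
  simp only [h1, Matrix.one_apply]
  by_cases hvw : v = w
  · subst hvw; simp
  · rw [if_neg hvw]
    obtain ⟨j, hj⟩ := Function.ne_iff.mp hvw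
    exact Finset.prod_eq_zero (Finset.mem_univ j) (by simp [hj])

section
open scoped MatrixOrder Matrix.Norms.L2Operator
theorem Matrix.posSemidef_iff_eq_transpose_mul_self {n : Type*} [Fintype n] [DecidableEq n]
    {A : Matrix n n ℂ} : A.PosSemidef ↔ ∃ B : Matrix n n ℂ, A = Bᴴ * B := by
  constructor
  · intro h
    obtain ⟨b, hb⟩ := CStarAlgebra.nonneg_iff_eq_star_mul_self.mp h.nonneg
    exact ⟨b, hb⟩
  · rintro ⟨B, rfl⟩
    exact Matrix.posSemidef_conjTranspose_mul_self B
end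

lemma prodPOVM_posSemidef {d N : ℕ} {X : Type*} [Fintype X] (M : X → Matrix (Fin d) (Fin d) ℂ)
    (hpsd : ∀ x, (M x).PosSemidef) (xs : Fin N → X) : (prodPOVM M N xs).PosSemidef := by
  choose B hB using fun x => (Matrix.posSemidef_iff_eq_transpose_mul_self.mp (hpsd x))
  refine Matrix.posSemidef_iff_eq_transpose_mul_self.mpr
    ⟨Matrix.of fun k v => ∏ j, B (xs j) (k j) (v j), ?_⟩
  ext v w
  show ∏ j, M (xs j) (v j) (w j) = _
  rw [Matrix.mul_apply]
  have : ∀ k : Fin N → Fin d,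
      (Matrix.of fun k v => ∏ j, B (xs j) (k j) (v j))ᴴ v k
        * (Matrix.of fun k v => ∏ j, B (xs j) (k j) (v j)) k w
      = ∏ j, ((starRingEnd ℂ) (B (xs j) (k j) (v j)) * B (xs j) (k j) (w j)) := by
    intro k
    simp only [Matrix.conjTranspose_apply, Matrix.of_apply, star_prod, RCLike.star_def, map_prod,
      ← Finset.prod_mul_distrib]
  simp only [this]
  rw [sum_fun_prod (fun (j : Fin N) (c : Fin d) =>
    (starRingEnd ℂ) (B (xs j) c (v j)) * B (xs j) c (w j))]
  refine Finset.prod_congr rfl fun j _ => ?_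
  rw [hB (xs j), Matrix.mul_apply]
  simp [Matrix.conjTranspose_apply]


lemma psd_dot_re {n : Type*} [Fintype n] {A : Matrix n n ℂ} (hA : A.PosSemidef) (u : n → ℂ) :
    star u ⬝ᵥ (A *ᵥ u) = ((star u ⬝ᵥ (A *ᵥ u)).re : ℂ) ∧ 0 ≤ (star u ⬝ᵥ (A *ᵥ u)).re := by
  have h := hA.dotProduct_mulVec_nonneg u
  rw [Complex.le_def] at h
  exact ⟨Complex.ext rfl (by simpa using h.2.symm), by simpa using h.1⟩

lemma psd_cs_s18 {n : Type*} [Fintype n] [DecidableEq n] {A : Matrix n n ℂ} (hA : A.PosSemidef)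
    (u v : n → ℂ) :
    ‖star u ⬝ᵥ (A *ᵥ v)‖ ^ 2
      ≤ (star u ⬝ᵥ (A *ᵥ u)).re * (star v ⬝ᵥ (A *ᵥ v)).re := by
  obtain ⟨B, rfl⟩ := Matrix.posSemidef_iff_eq_transpose_mul_self.mp hA
  have key : ∀ w z : n → ℂ, star w ⬝ᵥ ((Bᴴ * B) *ᵥ z) = star (B *ᵥ w) ⬝ᵥ (B *ᵥ z) := by
    intro w z
    rw [← Matrix.mulVec_mulVec, Matrix.dotProduct_mulVec, ← Matrix.star_mulVec]
  simp only [key]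
  set a := B *ᵥ u
  set b := B *ᵥ v
  have ha : star a ⬝ᵥ b = (inner ℂ ((WithLp.equiv 2 (n → ℂ)).symm a)
      ((WithLp.equiv 2 (n → ℂ)).symm b) : ℂ) := dotProduct_comm _ _
  have haa : star a ⬝ᵥ a = (inner ℂ ((WithLp.equiv 2 (n → ℂ)).symm a)
      ((WithLp.equiv 2 (n → ℂ)).symm a) : ℂ) := dotProduct_comm _ _
  have hbb : star b ⬝ᵥ b = (inner ℂ ((WithLp.equiv 2 (n → ℂ)).symm b)
      ((WithLp.equiv 2 (n → ℂ)).symm b) : ℂ) := dotProduct_comm _ _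
  rw [ha, haa, hbb]
  set x := (WithLp.equiv 2 (n → ℂ)).symm a
  set y := (WithLp.equiv 2 (n → ℂ)).symm b
  have h1 : ‖(inner ℂ x y : ℂ)‖ ≤ ‖x‖ * ‖y‖ := by
    exact norm_inner_le_norm x y
  have h2 : ((inner ℂ x x : ℂ)).re = ‖x‖ ^ 2 := by
    rw [← RCLike.re_eq_complex_re]; exact inner_self_eq_norm_sq x
  have h3 : ((inner ℂ y y : ℂ)).re = ‖y‖ ^ 2 := by
    rw [← RCLike.re_eq_complex_re]; exact inner_self_eq_norm_sq y
  rw [h2, h3]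
  calc ‖(inner ℂ x y : ℂ)‖ ^ 2 ≤ (‖x‖ * ‖y‖) ^ 2 := by
        apply pow_le_pow_left₀ (norm_nonneg _) h1
    _ = ‖x‖ ^ 2 * ‖y‖ ^ 2 := by ring

lemma re_sq_le_cs {n : Type*} [Fintype n] [DecidableEq n] {A : Matrix n n ℂ} (hA : A.PosSemidef)
    (u v : n → ℂ) :
    (star u ⬝ᵥ (A *ᵥ v)).re ^ 2 ≤ (star u ⬝ᵥ (A *ᵥ u)).re * (star v ⬝ᵥ (A *ᵥ v)).re := by
  refine le_trans ?_ (psd_cs_s18 hA u v)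
  rw [Complex.sq_norm, Complex.normSq_apply]
  nlinarith [sq_nonneg (star u ⬝ᵥ (A *ᵥ v)).im]

lemma dot_hermitian_conj {n : Type*} [Fintype n] {A : Matrix n n ℂ} (hA : A.IsHermitian)
    (u v : n → ℂ) :
    star v ⬝ᵥ (A *ᵥ u) = (starRingEnd ℂ) (star u ⬝ᵥ (A *ᵥ v)) := by
  simp only [dotProduct, mulVec, map_sum, _root_.map_mul, Pi.star_apply, RCLike.star_def,
    Complex.conj_conj, Finset.mul_sum]
  rw [Finset.sum_comm]
  refine Finset.sum_congr rfl fun i _ => Finset.sum_congr rfl fun j _ => ?_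
  have h : (starRingEnd ℂ) (A i j) = A j i := by
    conv_rhs => rw [← hA]
    simp [Matrix.conjTranspose_apply]
  rw [← h]
  ring

lemma Gamma_le_one {ι X : Type*} [Fintype ι] [DecidableEq ι] [Fintype X]
    (P : X → Matrix ι ι ℂ) (hpsd : ∀ x, (P x).PosSemidef) (hsum : ∑ x, P x = 1)
    (Ξ Ξp : ι → ℂ) (hΞp : star Ξp ⬝ᵥ Ξp = 1) : Gamma P Ξ Ξp ≤ 1 := by
  have hterm : ∀ x ∈ Finset.univ.filter (fun x => 0 < qre P Ξ Ξ x),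
      (qre P Ξp Ξ x) ^ 2 / qre P Ξ Ξ x ≤ qre P Ξp Ξp x := by
    intro x hx
    rw [Finset.mem_filter] at hx
    rw [div_le_iff₀ hx.2]
    exact re_sq_le_cs (hpsd x) Ξp Ξ
  calc Gamma P Ξ Ξp ≤ ∑ x ∈ Finset.univ.filter (fun x => 0 < qre P Ξ Ξ x), qre P Ξp Ξp x :=
        Finset.sum_le_sum hterm
    _ ≤ ∑ x, qre P Ξp Ξp x :=
        Finset.sum_le_sum_of_subset_of_nonneg (Finset.filter_subset _ _)
          (fun x _ _ => (psd_dot_re (hpsd x) Ξp).2)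
    _ = 1 := by
      have h1 : ∑ x, qre P Ξp Ξp x = (∑ x, star Ξp ⬝ᵥ (P x *ᵥ Ξp)).re := by
        rw [Complex.re_sum]; rfl
      rw [h1]
      have h2 : ∑ x, star Ξp ⬝ᵥ (P x *ᵥ Ξp) = star Ξp ⬝ᵥ ((∑ x, P x) *ᵥ Ξp) := by
        simp only [mulVec, dotProduct, Matrix.sum_apply, Finset.mul_sum, Finset.sum_mul]
        rw [Finset.sum_comm]
        refine Finset.sum_congr rfl fun i _ => ?_
        rw [Finset.sum_comm]
        try exact Finset.sum_congr rfl fun x _ => Finset.sum_congr rfl fun j _ => by ring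
      rw [h2, hsum, Matrix.one_mulVec, hΞp]
      simp

lemma exists_orthonormal_pair {d : ℕ} {A : Matrix (Fin d) (Fin d) ℂ} (hA : A.IsHermitian)
    (hnot : ∀ c : ℂ, A ≠ c • (1 : Matrix (Fin d) (Fin d) ℂ)) :
    ∃ ζ η : Fin d → ℂ, star ζ ⬝ᵥ ζ = 1 ∧ star η ⬝ᵥ η = 1 ∧ star ζ ⬝ᵥ η = 0 ∧
      (star ζ ⬝ᵥ (A *ᵥ ζ)).re ≠ (star η ⬝ᵥ (A *ᵥ η)).re := by
  by_cases hall : ∀ i k : Fin d, hA.eigenvalues i = hA.eigenvalues k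
  · exfalso
    rcases Nat.eq_zero_or_pos d with hd0 | hd0
    · subst hd0
      exact hnot 0 (by ext i; exact i.elim0)
    · set i0 : Fin d := ⟨0, hd0⟩
      apply hnot ((hA.eigenvalues i0 : ℝ) : ℂ)
      have hdiag : Matrix.diagonal (RCLike.ofReal ∘ hA.eigenvalues)
          = ((hA.eigenvalues i0 : ℝ) : ℂ) • (1 : Matrix (Fin d) (Fin d) ℂ) := by
        rw [Matrix.smul_one_eq_diagonal]
        have : (RCLike.ofReal ∘ hA.eigenvalues : Fin d → ℂ)
            = fun _ => ((hA.eigenvalues i0 : ℝ) : ℂ) := funext fun k => by simp [hall k i0]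
        rw [this]
      calc A = _ := hA.spectral_theorem
        _ = ((hA.eigenvalues i0 : ℝ) : ℂ) • (1 : Matrix (Fin d) (Fin d) ℂ) := by
            rw [hdiag]
            rw [map_smul, map_one]
  · push_neg at hall
    obtain ⟨i, k, hik⟩ := hall
    have hne : i ≠ k := fun h => hik (by rw [h])
    refine ⟨⇑(hA.eigenvectorBasis i), ⇑(hA.eigenvectorBasis k), ?_, ?_, ?_, ?_⟩
    · have := hA.eigenvectorBasis.orthonormal
      rw [orthonormal_iff_ite] at this
      have h := this i i
      simp only [if_pos rfl] at h
      rw [EuclideanSpace.inner_eq_star_dotProduct, dotProduct_comm] at h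
      exact h
    · have := hA.eigenvectorBasis.orthonormal
      rw [orthonormal_iff_ite] at this
      have h := this k k
      simp only [if_pos rfl] at h
      rw [EuclideanSpace.inner_eq_star_dotProduct, dotProduct_comm] at h
      exact h
    · have := hA.eigenvectorBasis.orthonormal
      rw [orthonormal_iff_ite] at this
      have h := this i k
      rw [if_neg hne] at h
      rw [EuclideanSpace.inner_eq_star_dotProduct, dotProduct_comm] at h
      exact h
    · have h1 := hA.eigenvalues_eq i
      have h2 := hA.eigenvalues_eq k
      intro hcon
      apply hik
      rw [h1, h2]
      exact hcon

lemma sum_qre_eq_one {ι X : Type*} [Fintype ι] [DecidableEq ι] [Fintype X]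
    (P : X → Matrix ι ι ℂ) (hsum : ∑ x, P x = 1)
    (u : ι → ℂ) (hu : star u ⬝ᵥ u = 1) :
    ∑ x, (star u ⬝ᵥ (P x *ᵥ u)).re = 1 := by
  have h1 : ∑ x, (star u ⬝ᵥ (P x *ᵥ u)).re = (∑ x, star u ⬝ᵥ (P x *ᵥ u)).re := by
    rw [Complex.re_sum]
  rw [h1]
  have h2 : ∑ x, star u ⬝ᵥ (P x *ᵥ u) = star u ⬝ᵥ ((∑ x, P x) *ᵥ u) := by
    simp only [mulVec, dotProduct, Matrix.sum_apply, Finset.mul_sum, Finset.sum_mul]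
    rw [Finset.sum_comm]
    refine Finset.sum_congr rfl fun i _ => ?_
    rw [Finset.sum_comm]
  rw [h2, hsum, Matrix.one_mulVec, hu]
  simp

lemma mulVec_r_add {n : Type*} [Fintype n] (A : Matrix n n ℂ) (r : ℂ) (c e : n → ℂ) :
    (A *ᵥ fun w => r * (c w + e w)) = fun v => r * ((A *ᵥ c) v + (A *ᵥ e) v) := by
  funext v
  simp only [mulVec, dotProduct]
  rw [← Finset.sum_add_distrib, Finset.mul_sum]
  exact Finset.sum_congr rfl fun w _ => by ring

lemma dot_mulVec_expand {n : Type*} [Fintype n] (A : Matrix n n ℂ) (r : ℝ) (a b c e : n → ℂ) :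
    star (fun v => (r:ℂ) * (a v + b v)) ⬝ᵥ (A *ᵥ (fun v => (r:ℂ) * (c v + e v)))
      = (r:ℂ)^2 * (star a ⬝ᵥ (A *ᵥ c) + star a ⬝ᵥ (A *ᵥ e)
          + star b ⬝ᵥ (A *ᵥ c) + star b ⬝ᵥ (A *ᵥ e)) := by
  rw [mulVec_r_add]
  simp only [dotProduct, Pi.star_apply, star_mul', map_add, RCLike.star_def, Complex.conj_ofReal]
  rw [← Finset.sum_add_distrib, ← Finset.sum_add_distrib, ← Finset.sum_add_distrib,
    Finset.mul_sum]
  exact Finset.sum_congr rfl fun v _ => by ring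

lemma dot_r_add {n : Type*} [Fintype n] (r : ℝ) (a b c e : n → ℂ) :
    star (fun v => (r:ℂ) * (a v + b v)) ⬝ᵥ (fun v => (r:ℂ) * (c v + e v))
      = (r:ℂ)^2 * (star a ⬝ᵥ c + star a ⬝ᵥ e + star b ⬝ᵥ c + star b ⬝ᵥ e) := by
  have := dot_mulVec_expand (1 : Matrix n n ℂ) r a b c e
  simpa [Matrix.one_mulVec] using this

set_option maxHeartbeats 1000000 in
lemma gamma_lower {d N : ℕ} {X : Type*} [Fintype X] (M : X → Matrix (Fin d) (Fin d) ℂ)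
    (hpsd : ∀ x, (M x).PosSemidef) (hsum : ∑ x, M x = 1) (hN : 1 ≤ N)
    (ζ η : Fin d → ℂ) (hζ : star ζ ⬝ᵥ ζ = 1) (hη : star η ⬝ᵥ η = 1) (hort : star ζ ⬝ᵥ η = 0) :
    ∃ Ξ Ξp : (Fin N → Fin d) → ℂ,
      star Ξ ⬝ᵥ Ξ = 1 ∧ star Ξp ⬝ᵥ Ξp = 1 ∧ star Ξ ⬝ᵥ Ξp = 0 ∧
      1 - (∑ x, Real.sqrt ((star ζ ⬝ᵥ (M x *ᵥ ζ)).re) * Real.sqrt ((star η ⬝ᵥ (M x *ᵥ η)).re)) ^ N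
        ≤ Gamma (prodPOVM M N) Ξ Ξp := by
  set p : X → ℝ := fun x => (star ζ ⬝ᵥ (M x *ᵥ ζ)).re with hp_def
  set q : X → ℝ := fun x => (star η ⬝ᵥ (M x *ᵥ η)).re with hq_def
  have hp0 : ∀ x, 0 ≤ p x := fun x => (psd_dot_re (hpsd x) ζ).2
  have hq0 : ∀ x, 0 ≤ q x := fun x => (psd_dot_re (hpsd x) η).2
  have hpsum : ∑ x, p x = 1 := sum_qre_eq_one M hsum ζ hζ
  have hqsum : ∑ x, q x = 1 := sum_qre_eq_one M hsum η hη
  have hpC : ∀ x, star ζ ⬝ᵥ (M x *ᵥ ζ) = ((p x : ℝ) : ℂ) := fun x => (psd_dot_re (hpsd x) ζ).1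
  have hqC : ∀ x, star η ⬝ᵥ (M x *ᵥ η) = ((q x : ℝ) : ℂ) := fun x => (psd_dot_re (hpsd x) η).1
  set c : X → ℂ := fun x => star ζ ⬝ᵥ (M x *ᵥ η) with hc_def
  have hcη : ∀ x, star η ⬝ᵥ (M x *ᵥ ζ) = (starRingEnd ℂ) (c x) :=
    fun x => dot_hermitian_conj (hpsd x).1 ζ η
  have hcabs : ∀ x, ‖c x‖ ≤ Real.sqrt (p x) * Real.sqrt (q x) := by
    intro x
    rw [← Real.sqrt_mul (hp0 x)]
    rw [show Real.sqrt (p x * q x) = Real.sqrt (p x * q x) from rfl]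
    rw [← Real.sqrt_sq (norm_nonneg (c x))]
    apply Real.sqrt_le_sqrt
    exact psd_cs_s18 (hpsd x) ζ η
  -- vectors
  set r : ℝ := (Real.sqrt 2)⁻¹ with hr_def
  have hr2 : (r:ℝ)^2 = 2⁻¹ := by
    rw [hr_def, inv_pow, Real.sq_sqrt (by norm_num : (0:ℝ) ≤ 2)]
  have hr2C : ((r:ℂ))^2 = (2⁻¹ : ℝ) := by
    rw [show ((r:ℂ))^2 = (((r^2 : ℝ)) : ℂ) by push_cast; ring, hr2]
  set Zζ := prodVec ζ N with hZζ_def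
  set Zη := prodVec η N with hZη_def
  have hZζζ : star Zζ ⬝ᵥ Zζ = 1 := by rw [hZζ_def, prodVec_dot, hζ, one_pow]
  have hZηη : star Zη ⬝ᵥ Zη = 1 := by rw [hZη_def, prodVec_dot, hη, one_pow]
  have hN0 : N ≠ 0 := by omega
  have hZζη : star Zζ ⬝ᵥ Zη = 0 := by
    rw [hZζ_def, hZη_def, prodVec_dot, hort, zero_pow hN0]
  have hortηζ : star η ⬝ᵥ ζ = 0 := by
    have h := congrArg star hort
    rwa [Matrix.star_dotProduct, star_star, star_zero] at h
  have hZηζ : star Zη ⬝ᵥ Zζ = 0 := by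
    rw [hZη_def, hZζ_def, prodVec_dot, hortηζ, zero_pow hN0]
  refine ⟨fun v => (r:ℂ) * (Zζ v + Zη v), fun v => (r:ℂ) * (Zζ v + (-Zη) v), ?_, ?_, ?_, ?_⟩
  · rw [dot_r_add]
    rw [hZζζ, hZηη, hZζη, hZηζ, hr2C]
    norm_num
  · rw [dot_r_add]
    have h1 : star Zζ ⬝ᵥ (-Zη) = 0 := by rw [dotProduct_neg, hZζη, neg_zero]
    have h2 : star (-Zη) ⬝ᵥ Zζ = 0 := by rw [star_neg, neg_dotProduct, hZηζ, neg_zero]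
    have h3 : star (-Zη) ⬝ᵥ (-Zη) = 1 := by
      rw [star_neg, neg_dotProduct, dotProduct_neg, hZηη, neg_neg]
    rw [hZζζ, h1, h2, h3, hr2C]
    norm_num
  · rw [dot_r_add]
    have h1 : star Zζ ⬝ᵥ (-Zη) = 0 := by rw [dotProduct_neg, hZζη, neg_zero]
    have h3 : star Zη ⬝ᵥ (-Zη) = -1 := by rw [dotProduct_neg, hZηη]
    rw [hZζζ, h1, hZηζ, h3, hr2C]
    norm_num
  · set F := ∑ x, Real.sqrt (p x) * Real.sqrt (q x) with hF_def
    set P := prodPOVM M N with hP_def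
    have hPr : ∀ xs : Fin N → X, star Zζ ⬝ᵥ (P xs *ᵥ Zζ) = ((∏ j, p (xs j) : ℝ) : ℂ) := by
      intro xs
      rw [hZζ_def, hP_def, prodPOVM_dot, Complex.ofReal_prod]
      exact Finset.prod_congr rfl fun j _ => hpC (xs j)
    have hQr : ∀ xs : Fin N → X, star Zη ⬝ᵥ (P xs *ᵥ Zη) = ((∏ j, q (xs j) : ℝ) : ℂ) := by
      intro xs
      rw [hZη_def, hP_def, prodPOVM_dot, Complex.ofReal_prod]
      exact Finset.prod_congr rfl fun j _ => hqC (xs j)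
    have hC : ∀ xs : Fin N → X, star Zζ ⬝ᵥ (P xs *ᵥ Zη) = ∏ j, c (xs j) := by
      intro xs
      rw [hZζ_def, hZη_def, hP_def, prodPOVM_dot]
    have hCc : ∀ xs : Fin N → X,
        star Zη ⬝ᵥ (P xs *ᵥ Zζ) = (starRingEnd ℂ) (∏ j, c (xs j)) := by
      intro xs
      rw [hZη_def, hZζ_def, hP_def, prodPOVM_dot, map_prod]
      exact Finset.prod_congr rfl fun j _ => hcη (xs j)
    set A : (Fin N → X) → ℝ := fun xs => ∏ j, Real.sqrt (p (xs j)) with hA_def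
    set B : (Fin N → X) → ℝ := fun xs => ∏ j, Real.sqrt (q (xs j)) with hB_def
    have hA0 : ∀ xs, 0 ≤ A xs := fun xs => Finset.prod_nonneg fun j _ => Real.sqrt_nonneg _
    have hB0 : ∀ xs, 0 ≤ B xs := fun xs => Finset.prod_nonneg fun j _ => Real.sqrt_nonneg _
    have hA2 : ∀ xs, A xs ^ 2 = ∏ j, p (xs j) := by
      intro xs
      rw [hA_def, ← Finset.prod_pow]
      exact Finset.prod_congr rfl fun j _ => Real.sq_sqrt (hp0 _)
    have hB2 : ∀ xs, B xs ^ 2 = ∏ j, q (xs j) := by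
      intro xs
      rw [hB_def, ← Finset.prod_pow]
      exact Finset.prod_congr rfl fun j _ => Real.sq_sqrt (hq0 _)
    have hCab : ∀ xs, ‖∏ j, c (xs j)‖ ≤ A xs * B xs := by
      intro xs
      rw [norm_prod, hA_def, hB_def, ← Finset.prod_mul_distrib]
      exact Finset.prod_le_prod (fun j _ => norm_nonneg _) (fun j _ => hcabs (xs j))
    have hq1 : ∀ xs, qre P (fun v => (r:ℂ) * (Zζ v + Zη v)) (fun v => (r:ℂ) * (Zζ v + Zη v)) xs
        = ((∏ j, p (xs j)) + (∏ j, q (xs j)) + 2 * (∏ j, c (xs j)).re) / 2 := by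
      intro xs
      show (star (fun v => (r:ℂ) * (Zζ v + Zη v)) ⬝ᵥ
        (P xs *ᵥ fun v => (r:ℂ) * (Zζ v + Zη v))).re = _
      rw [dot_mulVec_expand, hPr xs, hQr xs, hC xs, hCc xs, hr2C]
      rw [Complex.re_ofReal_mul]
      simp only [Complex.add_re, Complex.ofReal_re, Complex.conj_re]
      ring
    have hq2 : ∀ xs, qre P (fun v => (r:ℂ) * (Zζ v + (-Zη) v)) (fun v => (r:ℂ) * (Zζ v + Zη v)) xs
        = ((∏ j, p (xs j)) - (∏ j, q (xs j))) / 2 := by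
      intro xs
      show (star (fun v => (r:ℂ) * (Zζ v + (-Zη) v)) ⬝ᵥ
        (P xs *ᵥ fun v => (r:ℂ) * (Zζ v + Zη v))).re = _
      rw [dot_mulVec_expand]
      rw [show star (-Zη) ⬝ᵥ (P xs *ᵥ Zζ) = -(star Zη ⬝ᵥ (P xs *ᵥ Zζ)) by
        rw [star_neg, neg_dotProduct]]
      rw [show star (-Zη) ⬝ᵥ (P xs *ᵥ Zη) = -(star Zη ⬝ᵥ (P xs *ᵥ Zη)) by
        rw [star_neg, neg_dotProduct]]
      rw [hPr xs, hQr xs, hC xs, hCc xs, hr2C]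
      rw [Complex.re_ofReal_mul]
      simp only [Complex.add_re, Complex.neg_re, Complex.ofReal_re, Complex.conj_re]
      ring
    have hkey : ∀ xs ∈ Finset.univ.filter (fun xs =>
          0 < qre P (fun v => (r:ℂ) * (Zζ v + Zη v)) (fun v => (r:ℂ) * (Zζ v + Zη v)) xs),
        (A xs - B xs) ^ 2 / 2
          ≤ (qre P (fun v => (r:ℂ) * (Zζ v + (-Zη) v)) (fun v => (r:ℂ) * (Zζ v + Zη v)) xs) ^ 2
            / qre P (fun v => (r:ℂ) * (Zζ v + Zη v)) (fun v => (r:ℂ) * (Zζ v + Zη v)) xs := by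
      intro xs hxs
      rw [Finset.mem_filter] at hxs
      have ht := hxs.2
      rw [hq1 xs] at ht ⊢
      rw [hq2 xs]
      have hRC1 : (∏ j, c (xs j)).re ≤ A xs * B xs :=
        le_trans (Complex.re_le_norm _) (hCab xs)
      have hABpos : 0 < A xs + B xs := by
        rcases lt_or_eq_of_le (add_nonneg (hA0 xs) (hB0 xs)) with h | h
        · exact h
        · exfalso
          have hA' : A xs = 0 := by nlinarith [hA0 xs, hB0 xs]
          have hB' : B xs = 0 := by nlinarith [hA0 xs, hB0 xs]
          rw [← hA2 xs, ← hB2 xs, hA', hB'] at ht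
          nlinarith [hRC1]
      rw [le_div_iff₀ ht]
      have hPQ : (∏ j, p (xs j)) = A xs ^ 2 := (hA2 xs).symm
      have hQQ : (∏ j, q (xs j)) = B xs ^ 2 := (hB2 xs).symm
      rw [hPQ, hQQ] at ht ⊢
      have haux : 0 ≤ (A xs + B xs) ^ 2 - (A xs ^ 2 + B xs ^ 2 + 2 * (∏ j, c (xs j)).re) := by
        nlinarith [hRC1]
      nlinarith [mul_nonneg (sq_nonneg (A xs - B xs)) haux, sq_nonneg (A xs - B xs)]
    have hzero : ∀ xs ∈ (Finset.univ : Finset (Fin N → X)), xs ∉ Finset.univ.filter (fun xs =>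
          0 < qre P (fun v => (r:ℂ) * (Zζ v + Zη v)) (fun v => (r:ℂ) * (Zζ v + Zη v)) xs) →
        (A xs - B xs) ^ 2 / 2 = 0 := by
      intro xs _ hxs
      rw [Finset.mem_filter] at hxs
      push_neg at hxs
      have ht := hxs (Finset.mem_univ xs)
      rw [hq1 xs] at ht
      have hRC2 : -(A xs * B xs) ≤ (∏ j, c (xs j)).re := by
        have h1 : |(∏ j, c (xs j)).re| ≤ ‖∏ j, c (xs j)‖ := Complex.abs_re_le_norm _
        have := hCab xs
        cases abs_le.mp h1 with
        | intro hl hr => linarith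
      have h2 : (A xs - B xs) ^ 2 / 2 ≤ ((∏ j, p (xs j)) + (∏ j, q (xs j))
          + 2 * (∏ j, c (xs j)).re) / 2 := by
        rw [← hA2 xs, ← hB2 xs]
        nlinarith [hRC2]
      nlinarith [sq_nonneg (A xs - B xs), h2, ht]
    have e1 : ∑ xs : Fin N → X, (∏ j, p (xs j)) = 1 := by
      rw [sum_fun_prod (fun (_ : Fin N) x => p x)]
      simp [hpsum]
    have e2 : ∑ xs : Fin N → X, (∏ j, q (xs j)) = 1 := by
      rw [sum_fun_prod (fun (_ : Fin N) x => q x)]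
      simp [hqsum]
    have e3 : ∑ xs : Fin N → X, A xs * B xs = F ^ N := by
      have h : ∀ xs : Fin N → X, A xs * B xs
          = ∏ j, (Real.sqrt (p (xs j)) * Real.sqrt (q (xs j))) := by
        intro xs
        rw [hA_def, hB_def, ← Finset.prod_mul_distrib]
      simp only [h]
      rw [sum_fun_prod (fun (_ : Fin N) x => Real.sqrt (p x) * Real.sqrt (q x))]
      rw [← hF_def, Finset.prod_const, Finset.card_univ, Fintype.card_fin]
    have hsum1 : ∑ xs : Fin N → X, (A xs - B xs) ^ 2 / 2 = 1 - F ^ N := by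
      have h : ∀ xs : Fin N → X, (A xs - B xs) ^ 2 / 2
          = (∏ j, p (xs j)) / 2 + (∏ j, q (xs j)) / 2 - A xs * B xs := by
        intro xs
        rw [← hA2 xs, ← hB2 xs]
        ring
      rw [Finset.sum_congr rfl fun xs _ => h xs]
      rw [Finset.sum_sub_distrib, Finset.sum_add_distrib, ← Finset.sum_div, ← Finset.sum_div,
        e1, e2, e3]
      ring
    show _ ≤ Gamma P _ _
    unfold Gamma
    calc 1 - F ^ N = ∑ xs : Fin N → X, (A xs - B xs) ^ 2 / 2 := hsum1.symm
      _ = ∑ xs ∈ Finset.univ.filter (fun xs =>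
            0 < qre P (fun v => (r:ℂ) * (Zζ v + Zη v)) (fun v => (r:ℂ) * (Zζ v + Zη v)) xs),
          (A xs - B xs) ^ 2 / 2 := (Finset.sum_subset (Finset.filter_subset _ _) hzero).symm
      _ ≤ _ := Finset.sum_le_sum hkey


/-- Theorem 1, asymptotic recovery of the perfect QFI: for a POVM
that is not information-erasing, the supremum γ_N of the distinguishability
functional of M^{⊗N} over all orthonormal pairs satisfies γ_N ≤ 1 and γ_N → 1. -/
theorem gamma_sup_tendsto_one
    {d : ℕ} (hd : 2 ≤ d) {X : Type*} [Fintype X] [Nonempty X]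
    (M : X → Matrix (Fin d) (Fin d) ℂ)
    (hpsd : ∀ x, (M x).PosSemidef) (hsum : ∑ x, M x = 1)
    (y : X) (hy : ∀ c : ℂ, M y ≠ c • (1 : Matrix (Fin d) (Fin d) ℂ))
    (γ : ℕ → ℝ)
    (hγ : ∀ N, 1 ≤ N → γ N =
      sSup { g : ℝ | ∃ Ξ Ξperp : (Fin N → Fin d) → ℂ,
        star Ξ ⬝ᵥ Ξ = 1 ∧ star Ξperp ⬝ᵥ Ξperp = 1 ∧ star Ξ ⬝ᵥ Ξperp = 0 ∧
        g = Gamma (prodPOVM M N) Ξ Ξperp }) :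
    (∀ N, 1 ≤ N → γ N ≤ 1) ∧
    Filter.Tendsto γ Filter.atTop (nhds 1) := by
  obtain ⟨ζ, η, hζ, hη, hort, hneq⟩ := exists_orthonormal_pair (hpsd y).1 hy
  set p : X → ℝ := fun x => (star ζ ⬝ᵥ (M x *ᵥ ζ)).re with hp_def
  set q : X → ℝ := fun x => (star η ⬝ᵥ (M x *ᵥ η)).re with hq_def
  have hp0 : ∀ x, 0 ≤ p x := fun x => (psd_dot_re (hpsd x) ζ).2
  have hq0 : ∀ x, 0 ≤ q x := fun x => (psd_dot_re (hpsd x) η).2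
  have hpsum : ∑ x, p x = 1 := sum_qre_eq_one M hsum ζ hζ
  have hqsum : ∑ x, q x = 1 := sum_qre_eq_one M hsum η hη
  set F := ∑ x, Real.sqrt (p x) * Real.sqrt (q x) with hF_def
  have hF0 : 0 ≤ F :=
    Finset.sum_nonneg fun x _ => mul_nonneg (Real.sqrt_nonneg _) (Real.sqrt_nonneg _)
  have hF1 : F < 1 := by
    have hsqne : Real.sqrt (p y) ≠ Real.sqrt (q y) := by
      intro h
      apply hneq
      have h1 : p y = q y := by
        rw [← Real.sq_sqrt (hp0 y), ← Real.sq_sqrt (hq0 y), h]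
      exact h1
    have hky : Real.sqrt (p y) * Real.sqrt (q y) < (p y + q y) / 2 := by
      have h1 : Real.sqrt (p y) ^ 2 = p y := Real.sq_sqrt (hp0 y)
      have h2 : Real.sqrt (q y) ^ 2 = q y := Real.sq_sqrt (hq0 y)
      have h3 : 0 < (Real.sqrt (p y) - Real.sqrt (q y)) ^ 2 := by
        have := sub_ne_zero.mpr hsqne
        positivity
      nlinarith
    have hkx : ∀ x, Real.sqrt (p x) * Real.sqrt (q x) ≤ (p x + q x) / 2 := by
      intro x
      nlinarith [sq_nonneg (Real.sqrt (p x) - Real.sqrt (q x)),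
        Real.sq_sqrt (hp0 x), Real.sq_sqrt (hq0 x)]
    calc F < ∑ x, (p x + q x) / 2 :=
          Finset.sum_lt_sum (fun x _ => hkx x) ⟨y, Finset.mem_univ y, hky⟩
      _ = 1 := by
          rw [← Finset.sum_div, Finset.sum_add_distrib, hpsum, hqsum]
          norm_num
  have hbdd : ∀ N : ℕ, ∀ g ∈ { g : ℝ | ∃ Ξ Ξperp : (Fin N → Fin d) → ℂ,
      star Ξ ⬝ᵥ Ξ = 1 ∧ star Ξperp ⬝ᵥ Ξperp = 1 ∧ star Ξ ⬝ᵥ Ξperp = 0 ∧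
      g = Gamma (prodPOVM M N) Ξ Ξperp }, g ≤ 1 := by
    rintro N g ⟨Ξ, Ξp, h1, h2, h3, rfl⟩
    exact Gamma_le_one (prodPOVM M N) (prodPOVM_posSemidef M hpsd)
      (sum_prodPOVM M hsum) Ξ Ξp h2
  have hmem : ∀ N : ℕ, 1 ≤ N → ∃ g ∈ { g : ℝ | ∃ Ξ Ξperp : (Fin N → Fin d) → ℂ,
      star Ξ ⬝ᵥ Ξ = 1 ∧ star Ξperp ⬝ᵥ Ξperp = 1 ∧ star Ξ ⬝ᵥ Ξperp = 0 ∧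
      g = Gamma (prodPOVM M N) Ξ Ξperp }, 1 - F ^ N ≤ g := by
    intro N hN
    obtain ⟨Ξ, Ξp, h1, h2, h3, h4⟩ := gamma_lower M hpsd hsum hN ζ η hζ hη hort
    exact ⟨Gamma (prodPOVM M N) Ξ Ξp, ⟨Ξ, Ξp, h1, h2, h3, rfl⟩, h4⟩
  have hub : ∀ N, 1 ≤ N → γ N ≤ 1 := by
    intro N hN
    rw [hγ N hN]
    obtain ⟨g, hg, _⟩ := hmem N hN
    exact csSup_le ⟨g, hg⟩ (hbdd N)
  have hlb : ∀ N, 1 ≤ N → 1 - F ^ N ≤ γ N := by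
    intro N hN
    rw [hγ N hN]
    obtain ⟨g, hg, hle⟩ := hmem N hN
    exact le_trans hle (le_csSup ⟨1, fun z hz => hbdd N z hz⟩ hg)
  refine ⟨hub, ?_⟩
  have hlim : Filter.Tendsto (fun N : ℕ => 1 - F ^ N) Filter.atTop (nhds 1) := by
    have h := tendsto_pow_atTop_nhds_zero_of_lt_one hF0 hF1
    have := Filter.Tendsto.sub (tendsto_const_nhds (x := (1:ℝ))) h
    simpa using this
  apply tendsto_of_tendsto_of_tendsto_of_le_of_le' hlim tendsto_const_nhds
  · filter_upwards [Filter.eventually_ge_atTop 1] with N hN using hlb N hN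
  · filter_upwards [Filter.eventually_ge_atTop 1] with N hN using hub N hN
end
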